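/- arXiv:1504.02911 — 5 statements merged into one kernel-verified Lean document; each statement's English description precedes it below -/
import Mathlib

section
/- Let S be a positive definite symmetric 2×2 real matrix and T a positive semidefinite symmetric 2×2 real matrix, and suppose T₂₂ − m_min·S₂₂ ≠ 0. Then the function β ↦ Q_S(β) = (b(β)ᵀ T b(β))/(b(β)ᵀ S b(β)) attains its infimum over ℝ, the infimum equals m_min, and the unique minimizer is β̂_LIML = (T₁₂ − m_min·S₁₂)/(T₂₂ − m_min·S₂₂); moreover β̂_LIML is also the unique maximizer over ℝ of β ↦ Q_T(β) = (a(β)ᵀ S⁻¹ T S⁻¹ a(β))/(a(β)ᵀ S⁻¹ a(β)), and the maximal value of Q_T equals trace(S⁻¹T) − m_min = m_max. -/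
open Matrix

/-- `a(β) = (β, 1)ᵀ`. -/
def aVec (β : ℝ) : Fin 2 → ℝ := ![β, 1]

/-- `b(β) = (1, -β)ᵀ`. -/
def bVec (β : ℝ) : Fin 2 → ℝ := ![1, -β]

/-- `Q_S(β) = (b(β)ᵀ T b(β))/(b(β)ᵀ S b(β))`. -/
noncomputable def QS (S T : Matrix (Fin 2) (Fin 2) ℝ) (β : ℝ) : ℝ :=
  (bVec β ⬝ᵥ T.mulVec (bVec β)) / (bVec β ⬝ᵥ S.mulVec (bVec β))

/-- `Q_T(β) = (a(β)ᵀ S⁻¹ T S⁻¹ a(β))/(a(β)ᵀ S⁻¹ a(β))`. -/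
noncomputable def QT (S T : Matrix (Fin 2) (Fin 2) ℝ) (β : ℝ) : ℝ :=
  (aVec β ⬝ᵥ (S⁻¹ * T * S⁻¹).mulVec (aVec β)) / (aVec β ⬝ᵥ S⁻¹.mulVec (aVec β))

/-! The eigenvalues of `S⁻¹ T` are the roots of
`det (μ S - T) = det S · (μ - m_min) (μ - m_max)`, and `trace (S⁻¹ T) = m_min + m_max` since the
roots of the characteristic polynomial of a `2 × 2` matrix sum to its trace. At `μ = T₂₂ / S₂₂`
the matrix `μ S - T` has a zero diagonal entry, so its determinant is `≤ 0`; hence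
`m_min S₂₂ ≤ T₂₂`. So `M = T - m_min S` is singular and symmetric with `M₂₂ > 0`, its quadratic
form is a perfect square, and `Q_S(β) - m_min = (M₁₂ - M₂₂ β)² / (M₂₂ · b(β)ᵀ S b(β))`.
Finally `S⁻¹ a(β)` is `(det S)⁻¹` times the quarter turn of `S b(β)`, which makes
`Q_T = trace (S⁻¹ T) - Q_S` (Cayley–Hamilton for `S⁻¹ T` in disguise). -/

namespace Matrix

section Spectrum

variable {K : Type*} [Field K]

theorem mem_spectrum_iff_fin_two (A : Matrix (Fin 2) (Fin 2) K) (μ : K) :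
    μ ∈ spectrum K A ↔ μ ^ 2 - A.trace * μ + A.det = 0 := by
  simp [mem_spectrum_iff_isRoot_charpoly, charpoly_fin_two]

theorem trace_sub_mem_spectrum_fin_two {A : Matrix (Fin 2) (Fin 2) K} {μ : K}
    (hμ : μ ∈ spectrum K A) : A.trace - μ ∈ spectrum K A := by
  rw [mem_spectrum_iff_fin_two] at hμ ⊢
  linear_combination hμ

theorem det_smul_sub_eq_det_mul_eval_charpoly {n : Type*} [Fintype n] [DecidableEq n]
    {S : Matrix n n K} (hS : IsUnit S.det) (T : Matrix n n K) (μ : K) :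
    (μ • S - T).det = S.det * (S⁻¹ * T).charpoly.eval μ := by
  rw [eval_charpoly, ← det_mul, mul_sub, mul_nonsing_inv_cancel_left _ _ hS, scalar_apply,
    ← smul_eq_mul_diagonal]

theorem mem_spectrum_inv_mul_iff_det_smul_sub_eq_zero {n : Type*} [Fintype n] [DecidableEq n]
    {S : Matrix n n K} (hS : IsUnit S.det) (T : Matrix n n K) (μ : K) :
    μ ∈ spectrum K (S⁻¹ * T) ↔ (μ • S - T).det = 0 := by
  rw [det_smul_sub_eq_det_mul_eval_charpoly hS, mul_eq_zero, or_iff_right hS.ne_zero,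
    mem_spectrum_iff_isRoot_charpoly, Polynomial.IsRoot.def]

end Spectrum

section SpectrumBounds

variable {K : Type*} [Field K] [LinearOrder K] [IsStrictOrderedRing K]
  {A : Matrix (Fin 2) (Fin 2) K} {mmin mmax : K}

theorem trace_eq_add_of_spectrum_bounds (hmin : mmin ∈ spectrum K A)
    (hmax : mmax ∈ spectrum K A) (hbounds : ∀ μ ∈ spectrum K A, mmin ≤ μ ∧ μ ≤ mmax) :
    A.trace = mmin + mmax := by
  have h₁ := (hbounds _ (trace_sub_mem_spectrum_fin_two hmin)).2
  have h₂ := (hbounds _ (trace_sub_mem_spectrum_fin_two hmax)).1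
  linarith

theorem eval_charpoly_eq_of_spectrum_bounds (hmin : mmin ∈ spectrum K A)
    (hmax : mmax ∈ spectrum K A) (hbounds : ∀ μ ∈ spectrum K A, mmin ≤ μ ∧ μ ≤ mmax) (μ : K) :
    A.charpoly.eval μ = (μ - mmin) * (μ - mmax) := by
  have htr := trace_eq_add_of_spectrum_bounds hmin hmax hbounds
  rw [mem_spectrum_iff_fin_two] at hmin
  simp only [charpoly_fin_two, Polynomial.eval_add, Polynomial.eval_sub, Polynomial.eval_mul,
    Polynomial.eval_pow, Polynomial.eval_X, Polynomial.eval_C]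
  linear_combination hmin + (mmin - μ) * htr

theorem det_smul_sub_eq_of_spectrum_bounds {S T : Matrix (Fin 2) (Fin 2) K} (hS : IsUnit S.det)
    (hmin : mmin ∈ spectrum K (S⁻¹ * T)) (hmax : mmax ∈ spectrum K (S⁻¹ * T))
    (hbounds : ∀ μ ∈ spectrum K (S⁻¹ * T), mmin ≤ μ ∧ μ ≤ mmax) (μ : K) :
    (μ • S - T).det = S.det * ((μ - mmin) * (μ - mmax)) := by
  rw [det_smul_sub_eq_det_mul_eval_charpoly hS,
    eval_charpoly_eq_of_spectrum_bounds hmin hmax hbounds]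

end SpectrumBounds

end Matrix

theorem bVec_ne_zero (β : ℝ) : bVec β ≠ 0 := fun h => by
  simpa [bVec] using congrFun h 0

theorem bVec_dotProduct_mulVec (M : Matrix (Fin 2) (Fin 2) ℝ) (β : ℝ) :
    bVec β ⬝ᵥ M *ᵥ bVec β = M 0 0 - (M 0 1 + M 1 0) * β + M 1 1 * β ^ 2 := by
  simp only [bVec, dotProduct, mulVec, Fin.sum_univ_two, cons_val_zero, cons_val_one,
    cons_val_fin_one]
  ring

theorem bVec_dotProduct_mulVec_of_det_eq_zero {M : Matrix (Fin 2) (Fin 2) ℝ} (hM : M.IsSymm)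
    (hdet : M.det = 0) (h11 : M 1 1 ≠ 0) (β : ℝ) :
    bVec β ⬝ᵥ M *ᵥ bVec β = (M 0 1 - M 1 1 * β) ^ 2 / M 1 1 := by
  rw [bVec_dotProduct_mulVec, eq_div_iff h11, hM.apply 0 1]
  rw [det_fin_two, hM.apply 0 1] at hdet
  linear_combination hdet

theorem QS_sub (S T : Matrix (Fin 2) (Fin 2) ℝ) {β : ℝ} (hβ : bVec β ⬝ᵥ S *ᵥ bVec β ≠ 0)
    (μ : ℝ) : QS S T β - μ = QS S (T - μ • S) β := by
  rw [QS, QS, sub_mulVec, smul_mulVec, dotProduct_sub, dotProduct_smul, smul_eq_mul,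
    sub_div, mul_div_cancel_right₀ _ hβ]

theorem QT_eq_trace_sub_QS {S : Matrix (Fin 2) (Fin 2) ℝ} (hS : S.IsSymm) (hdet : S.det ≠ 0)
    (T : Matrix (Fin 2) (Fin 2) ℝ) {β : ℝ} (hβ : bVec β ⬝ᵥ S *ᵥ bVec β ≠ 0) :
    QT S T β = (S⁻¹ * T).trace - QS S T β := by
  have hinv : S⁻¹ = S.det⁻¹ • !![S 1 1, -S 0 1; -S 0 1, S 0 0] := by
    rw [inv_def, adjugate_fin_two, Ring.inverse_eq_inv', hS.apply 0 1]
  have hnum : aVec β ⬝ᵥ (S⁻¹ * T * S⁻¹) *ᵥ aVec β = ((S 1 1 * β - S 0 1) ^ 2 * T 0 0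
      + (S 1 1 * β - S 0 1) * (S 0 0 - S 0 1 * β) * (T 0 1 + T 1 0)
      + (S 0 0 - S 0 1 * β) ^ 2 * T 1 1) / S.det ^ 2 := by
    simp only [hinv, aVec, dotProduct, mulVec, mul_apply, Fin.sum_univ_two, Matrix.smul_apply,
      smul_eq_mul, of_apply, cons_val', cons_val_zero, cons_val_one, empty_val',
      cons_val_fin_one]
    ring
  have hden : aVec β ⬝ᵥ S⁻¹ *ᵥ aVec β = (bVec β ⬝ᵥ S *ᵥ bVec β) / S.det := by
    rw [bVec_dotProduct_mulVec, hS.apply 0 1]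
    simp only [hinv, aVec, dotProduct, mulVec, Fin.sum_univ_two, Matrix.smul_apply, smul_eq_mul,
      of_apply, cons_val', cons_val_zero, cons_val_one, empty_val', cons_val_fin_one]
    ring
  have htr : (S⁻¹ * T).trace =
      (S 1 1 * T 0 0 - S 0 1 * (T 0 1 + T 1 0) + S 0 0 * T 1 1) / S.det := by
    simp only [hinv, trace_fin_two, mul_apply, Fin.sum_univ_two, Matrix.smul_apply,
      smul_eq_mul, of_apply, cons_val', cons_val_zero, cons_val_one, empty_val',
      cons_val_fin_one]
    ring
  have hdet_eq : S.det = S 0 0 * S 1 1 - S 0 1 ^ 2 := by rw [det_fin_two, hS.apply 0 1]; ring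
  rw [QT, QS, hnum, hden, htr]
  field_simp
  rw [bVec_dotProduct_mulVec, bVec_dotProduct_mulVec, hdet_eq, hS.apply 0 1]
  ring

section Pencil

variable {S T : Matrix (Fin 2) (Fin 2) ℝ} {mmin mmax : ℝ}

theorem mul_apply_one_one_le_of_spectrum_bounds (hS : S.PosDef) (hT : T.IsSymm)
    (hmin : mmin ∈ spectrum ℝ (S⁻¹ * T)) (hmax : mmax ∈ spectrum ℝ (S⁻¹ * T))
    (hbounds : ∀ μ ∈ spectrum ℝ (S⁻¹ * T), mmin ≤ μ ∧ μ ≤ mmax) :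
    mmin * S 1 1 ≤ T 1 1 := by
  have hS11 : 0 < S 1 1 := hS.diag_pos
  have hSsymm : S.IsSymm := isHermitian_iff_isSymm.mp hS.1
  set μ := T 1 1 / S 1 1
  have hμ11 : μ * S 1 1 = T 1 1 := div_mul_cancel₀ _ hS11.ne'
  have hdet : (μ • S - T).det = -(μ * S 0 1 - T 0 1) ^ 2 := by
    rw [det_fin_two]
    simp only [Matrix.sub_apply, Matrix.smul_apply, smul_eq_mul, hSsymm.apply 0 1, hT.apply 0 1,
      hμ11, sub_self]
    ring
  rw [det_smul_sub_eq_of_spectrum_bounds hS.det_pos.ne'.isUnit hmin hmax hbounds] at hdet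
  have hprod : (μ - mmin) * (μ - mmax) ≤ 0 := by
    refine nonpos_of_mul_nonpos_right ?_ hS.det_pos
    rw [hdet]
    exact neg_nonpos.mpr (sq_nonneg _)
  have hμ : mmin ≤ μ := by nlinarith [(hbounds mmin hmin).2]
  rwa [le_div_iff₀ hS11] at hμ

theorem QS_sub_eq_sq_div (hS : S.IsSymm) (hSdet : IsUnit S.det) (hT : T.IsSymm)
    (hmin : mmin ∈ spectrum ℝ (S⁻¹ * T)) (hdenom : T 1 1 - mmin * S 1 1 ≠ 0) {β : ℝ}
    (hβ : bVec β ⬝ᵥ S *ᵥ bVec β ≠ 0) :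
    QS S T β - mmin = (T 0 1 - mmin * S 0 1 - (T 1 1 - mmin * S 1 1) * β) ^ 2
      / ((T 1 1 - mmin * S 1 1) * (bVec β ⬝ᵥ S *ᵥ bVec β)) := by
  have hM : (T - mmin • S).IsSymm := hT.sub (hS.smul mmin)
  have hdet : (T - mmin • S).det = 0 := by
    rw [← neg_sub, det_neg, (mem_spectrum_inv_mul_iff_det_smul_sub_eq_zero hSdet T mmin).mp hmin,
      mul_zero]
  rw [QS_sub S T hβ, QS, bVec_dotProduct_mulVec_of_det_eq_zero hM hdet (by simpa using hdenom),
    div_div]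
  simp only [Matrix.sub_apply, Matrix.smul_apply, smul_eq_mul]

end Pencil

/-- `Q_S` attains its infimum `m_min` uniquely at `β̂_LIML`, which is also
the unique maximizer of `Q_T`, with maximal value `trace(S⁻¹T) − m_min = m_max`. -/
theorem stmt_4 (S T : Matrix (Fin 2) (Fin 2) ℝ) (hS : S.PosDef) (hT : T.PosSemidef)
    (mmin mmax : ℝ)
    (hmin : mmin ∈ spectrum ℝ (S⁻¹ * T)) (hmax : mmax ∈ spectrum ℝ (S⁻¹ * T))
    (hbounds : ∀ μ ∈ spectrum ℝ (S⁻¹ * T), mmin ≤ μ ∧ μ ≤ mmax)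
    (hdenom : T 1 1 - mmin * S 1 1 ≠ 0) :
    (∀ β : ℝ, mmin ≤ QS S T β) ∧
    QS S T ((T 0 1 - mmin * S 0 1) / (T 1 1 - mmin * S 1 1)) = mmin ∧
    (∀ β : ℝ, QS S T β = mmin → β = (T 0 1 - mmin * S 0 1) / (T 1 1 - mmin * S 1 1)) ∧
    (∀ β : ℝ, QT S T β ≤ (S⁻¹ * T).trace - mmin) ∧
    QT S T ((T 0 1 - mmin * S 0 1) / (T 1 1 - mmin * S 1 1)) = (S⁻¹ * T).trace - mmin ∧
    (∀ β : ℝ, QT S T β = (S⁻¹ * T).trace - mmin →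
      β = (T 0 1 - mmin * S 0 1) / (T 1 1 - mmin * S 1 1)) ∧
    (S⁻¹ * T).trace - mmin = mmax := by
  have hSsymm : S.IsSymm := isHermitian_iff_isSymm.mp hS.1
  have hTsymm : T.IsSymm := isHermitian_iff_isSymm.mp hT.1
  have hSdet : IsUnit S.det := hS.det_pos.ne'.isUnit
  have hb : ∀ β, 0 < bVec β ⬝ᵥ S *ᵥ bVec β := fun β => by
    simpa using hS.dotProduct_mulVec_pos (bVec_ne_zero β)
  have h11 : 0 < T 1 1 - mmin * S 1 1 :=
    (sub_nonneg.mpr (mul_apply_one_one_le_of_spectrum_bounds hS hTsymm hmin hmax hbounds)).lt_of_ne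
      hdenom.symm
  have hQS : ∀ β, QS S T β - mmin = _ := fun β =>
    QS_sub_eq_sq_div hSsymm hSdet hTsymm hmin hdenom (hb β).ne'
  have hQS_le : ∀ β, mmin ≤ QS S T β := fun β =>
    sub_nonneg.mp (hQS β ▸ div_nonneg (sq_nonneg _) (mul_pos h11 (hb β)).le)
  have hQS_eq : ∀ β, QS S T β = mmin ↔ β = (T 0 1 - mmin * S 0 1) / (T 1 1 - mmin * S 1 1) := by
    intro β
    rw [← sub_eq_zero, hQS, div_eq_zero_iff, or_iff_left (mul_pos h11 (hb β)).ne',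
      sq_eq_zero_iff, sub_eq_zero, eq_div_iff hdenom, mul_comm β, eq_comm]
  have hQT : ∀ β, QT S T β = (S⁻¹ * T).trace - QS S T β := fun β =>
    QT_eq_trace_sub_QS hSsymm hSdet.ne_zero T (hb β).ne'
  refine ⟨hQS_le, (hQS_eq _).mpr rfl, fun β => (hQS_eq β).mp, fun β => ?_, ?_, fun β hβ => ?_, ?_⟩
  · rw [hQT]
    linarith [hQS_le β]
  · rw [hQT, (hQS_eq _).mpr rfl]
  · rw [hQT, sub_right_inj] at hβ
    exact (hQS_eq β).mp hβ
  · rw [trace_eq_add_of_spectrum_bounds hmin hmax hbounds]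
    ring
end

section
/- Let n > 0 and K > 0 be real numbers and q > K/n. Then the function g(λ) = K·log(1 + (n/K)λ) − nλq/(K/n + λ), defined for λ ∈ [0, ∞), attains its minimum over [0, ∞) uniquely at λ = q − K/n; that is, g is strictly decreasing on [0, q − K/n] and strictly increasing on [q − K/n, ∞). -/
open Set

/-!
The derivative of `g` is `n c (λ - (q - c)) / (c + λ)²` with `c = K / n`, so it changes sign
exactly once on `[0, ∞)`, from negative to positive, at `λ = q - c`.
-/

theorem strictAntiOn_Icc_and_strictMonoOn_Ici_of_hasDerivAt {f f' : ℝ → ℝ} {a m : ℝ}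
    (hm : a ≤ m) (hf : ∀ x ∈ Ici a, HasDerivAt f (f' x) x)
    (hneg : ∀ x ∈ Ioo a m, f' x < 0) (hpos : ∀ x ∈ Ioi m, 0 < f' x) :
    StrictAntiOn f (Icc a m) ∧ StrictMonoOn f (Ici m) := by
  have hcont : ContinuousOn f (Ici a) := fun x hx => (hf x hx).continuousAt.continuousWithinAt
  constructor
  · refine strictAntiOn_of_deriv_neg (convex_Icc a m) (hcont.mono Icc_subset_Ici_self) ?_
    intro x hx
    rw [interior_Icc] at hx
    rw [(hf x hx.1.le).deriv]
    exact hneg x hx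
  · refine strictMonoOn_of_deriv_pos (convex_Ici m) (hcont.mono (Ici_subset_Ici.mpr hm)) ?_
    intro x hx
    rw [interior_Ici] at hx
    rw [(hf x (hm.trans (le_of_lt hx))).deriv]
    exact hpos x hx

theorem StrictAntiOn.lt_of_strictMonoOn_Ici {f : ℝ → ℝ} {a m : ℝ} (hm : a ≤ m)
    (hanti : StrictAntiOn f (Icc a m)) (hmono : StrictMonoOn f (Ici m)) :
    ∀ x ∈ Ici a, x ≠ m → f m < f x := by
  intro x hx hne
  rcases hne.lt_or_gt with hlt | hgt
  · exact hanti ⟨hx, hlt.le⟩ ⟨hm, le_rfl⟩ hlt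
  · exact hmono self_mem_Ici hgt.le hgt

theorem hasDerivAt_mul_log_sub_div {n K q x : ℝ} (hn : 0 < n) (hK : 0 < K) (hx : -(K / n) < x) :
    HasDerivAt (fun lam : ℝ => K * Real.log (1 + (n / K) * lam) - n * lam * q / (K / n + lam))
      (n * (K / n) * (x - (q - K / n)) / (K / n + x) ^ 2) x := by
  have hcx : 0 < K / n + x := by linarith
  have hlog : 0 < 1 + (n / K) * x := by
    have : 1 + (n / K) * x = (n / K) * (K / n + x) := by field_simp
    rw [this]
    exact mul_pos (div_pos hn hK) hcx
  have hlin : HasDerivAt (fun y : ℝ => 1 + (n / K) * y) (n / K) x := by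
    simpa using ((hasDerivAt_id x).const_mul (n / K)).const_add 1
  have hnum : HasDerivAt (fun y : ℝ => n * y * q) (n * q) x := by
    simpa using ((hasDerivAt_id x).const_mul n).mul_const q
  have hden : HasDerivAt (fun y : ℝ => K / n + y) 1 x := by
    simpa using (hasDerivAt_id x).const_add (K / n)
  refine (((hlin.log hlog.ne').const_mul K).sub (hnum.div hden hcx.ne')).congr_deriv ?_
  field_simp
  ring

/-- `g(λ) = K·log(1 + (n/K)λ) − nλq/(K/n + λ)` attains its minimum on
`[0,∞)` uniquely at `λ = q − K/n`: it is strictly decreasing on `[0, q − K/n]` and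
strictly increasing on `[q − K/n, ∞)`. -/
theorem stmt_5 (n K q : ℝ) (hn : 0 < n) (hK : 0 < K) (hq : K / n < q) :
    StrictAntiOn (fun lam : ℝ => K * Real.log (1 + (n / K) * lam) -
        n * lam * q / (K / n + lam)) (Icc 0 (q - K / n)) ∧
    StrictMonoOn (fun lam : ℝ => K * Real.log (1 + (n / K) * lam) -
        n * lam * q / (K / n + lam)) (Ici (q - K / n)) ∧
    (∀ lam ∈ Ici (0 : ℝ), lam ≠ q - K / n →
      K * Real.log (1 + (n / K) * (q - K / n)) -
          n * (q - K / n) * q / (K / n + (q - K / n)) <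
        K * Real.log (1 + (n / K) * lam) - n * lam * q / (K / n + lam)) := by
  have hc : 0 < K / n := div_pos hK hn
  have hm : 0 ≤ q - K / n := by linarith
  obtain ⟨hanti, hmono⟩ := strictAntiOn_Icc_and_strictMonoOn_Ici_of_hasDerivAt hm
    (fun x hx => hasDerivAt_mul_log_sub_div (q := q) hn hK (by linarith [mem_Ici.mp hx]))
    (fun x hx => div_neg_of_neg_of_pos (mul_neg_of_pos_of_neg (mul_pos hn hc) (by linarith [hx.2]))
      (pow_pos (by linarith [hx.1]) 2))
    (fun x hx => div_pos (mul_pos (mul_pos hn hc) (by linarith [mem_Ioi.mp hx]))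
      (pow_pos (by linarith [mem_Ioi.mp hx]) 2))
  exact ⟨hanti, hmono, hanti.lt_of_strictMonoOn_Ici hm hmono⟩
end

section
/- Let n, K, L be real numbers with K > 0, L ≥ 0, n − K − L > 0 and n − L > 0. Let S be positive definite symmetric 2×2, T positive semidefinite symmetric 2×2, with T₂₂ − m_min·S₂₂ ≠ 0. Set â = a(β̂_LIML), λ̂ = m_max − K/n, and Ω̂ = (1/(n − L))·[ (n − K − L)S + n( T − (λ̂/(âᵀS⁻¹â))·ââᵀ ) ]. If Ω̂ is invertible, then âᵀ Ω̂⁻¹ â = âᵀ S⁻¹ â. -/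
open Matrix

/-!
As `m_min` and `m_max` exhaust the spectrum of `S⁻¹T`, the characteristic polynomial of `S⁻¹T`
is `(X - m_min)(X - m_max)`, and Cayley–Hamilton gives `T S⁻¹ (T - m_min S) = m_max (T - m_min S)`.
So `â`, a multiple of the second column of `T - m_min S`, satisfies `T S⁻¹ â = m_max â`, and then
`Ω̂ S⁻¹ â = ((n - K - L) + n m_max - n λ̂) / (n - L) • â = â`, i.e. `Ω̂⁻¹ â = S⁻¹ â`.
-/

open Polynomial

theorem Matrix.charpoly_eq_of_extreme_eigenvalues {𝕜 : Type*} [Field 𝕜] [PartialOrder 𝕜]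
    (M : Matrix (Fin 2) (Fin 2) 𝕜) {a b : 𝕜} (ha : a ∈ spectrum 𝕜 M) (hb : b ∈ spectrum 𝕜 M)
    (hbounds : ∀ μ ∈ spectrum 𝕜 M, a ≤ μ ∧ μ ≤ b) :
    M.charpoly = (X - C a) * (X - C b) := by
  simp only [mem_spectrum_iff_isRoot_charpoly, charpoly_fin_two, IsRoot, eval_add, eval_sub,
    eval_mul, eval_pow, eval_X, eval_C] at ha hb hbounds
  have hother := hbounds (M.trace - a) (by linear_combination ha)
  have htrace : M.trace = a + b := by
    rcases mul_eq_zero.mp (by linear_combination hb - ha : (b - a) * (b - (M.trace - a)) = 0)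
      with h | h
    · have hab : b = a := sub_eq_zero.mp h
      subst hab
      linear_combination le_antisymm hother.2 hother.1
    · linear_combination -h
  have hdet : M.det = a * b := by linear_combination ha + a * htrace
  rw [charpoly_fin_two, htrace, hdet, C_add, C_mul]
  ring

section

variable {ι 𝕜 : Type*} [Fintype ι] [DecidableEq ι] [Field 𝕜]

theorem Matrix.mul_inv_mul_sub_smul_eq {S T : Matrix ι ι 𝕜} (hS : IsUnit S.det) {a b : 𝕜}
    (hchar : (S⁻¹ * T).charpoly = (X - C a) * (X - C b)) :
    T * S⁻¹ * (T - a • S) = b • (T - a • S) := by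
  have hCH : (S⁻¹ * T - b • 1) * (S⁻¹ * T - a • 1) = 0 := by
    have := (S⁻¹ * T).aeval_self_charpoly
    rw [hchar, mul_comm] at this
    simpa [Algebra.algebraMap_eq_smul_one] using this
  replace hCH := congrArg (S * ·) hCH
  simp only [mul_sub, sub_mul, mul_smul_comm, smul_mul_assoc, Matrix.mul_one, Matrix.one_mul,
    ← Matrix.mul_assoc, mul_nonsing_inv _ hS, nonsing_inv_mul_cancel_right _ _ hS,
    Matrix.mul_zero] at hCH ⊢
  rw [← sub_eq_zero, ← hCH]
  module

noncomputable def omegaHat (n K L : 𝕜) (S T : Matrix ι ι 𝕜) (a : ι → 𝕜) (lam : 𝕜) :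
    Matrix ι ι 𝕜 :=
  (1 / (n - L)) • ((n - K - L) • S + n • (T - (lam / (a ⬝ᵥ S⁻¹ *ᵥ a)) • vecMulVec a a))

theorem omegaHat_inv_mulVec {S T : Matrix ι ι 𝕜} (hS : IsUnit S.det) {a : ι → 𝕜}
    {μ n K L : 𝕜} (hTa : T *ᵥ (S⁻¹ *ᵥ a) = μ • a) (hq : a ⬝ᵥ S⁻¹ *ᵥ a ≠ 0) (hn : n ≠ 0)
    (hnL : n - L ≠ 0) (hΩ : IsUnit (omegaHat n K L S T a (μ - K / n)).det) :
    (omegaHat n K L S T a (μ - K / n))⁻¹ *ᵥ a = S⁻¹ *ᵥ a := by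
  set Ω := omegaHat n K L S T a (μ - K / n) with hΩdef
  have hΩa : Ω *ᵥ (S⁻¹ *ᵥ a) = a := by
    rw [hΩdef, omegaHat, smul_mulVec, add_mulVec, smul_mulVec, smul_mulVec, sub_mulVec,
      smul_mulVec, mulVec_mulVec, mul_nonsing_inv _ hS, one_mulVec, hTa, vecMulVec_mulVec,
      op_smul_eq_smul]
    match_scalars
    field_simp
    ring
  calc Ω⁻¹ *ᵥ a = Ω⁻¹ *ᵥ (Ω *ᵥ (S⁻¹ *ᵥ a)) := by rw [hΩa]
    _ = S⁻¹ *ᵥ a := by rw [mulVec_mulVec, nonsing_inv_mul _ hΩ, one_mulVec]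

end

theorem aVec_div_eq_smul_col (A : Matrix (Fin 2) (Fin 2) ℝ) (h : A 1 1 ≠ 0) :
    aVec (A 0 1 / A 1 1) = (A 1 1)⁻¹ • A.col 1 := by
  ext i
  fin_cases i <;> simp [aVec, div_eq_inv_mul, h]

theorem aVec_ne_zero (β : ℝ) : aVec β ≠ 0 := fun h => by simpa [aVec] using congrFun h 1

theorem mulVec_inv_mulVec_aVec_liml {S T : Matrix (Fin 2) (Fin 2) ℝ} (hS : IsUnit S.det)
    {mmin mmax : ℝ} (hchar : (S⁻¹ * T).charpoly = (X - C mmin) * (X - C mmax))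
    (hdenom : T 1 1 - mmin * S 1 1 ≠ 0) :
    T *ᵥ (S⁻¹ *ᵥ aVec ((T 0 1 - mmin * S 0 1) / (T 1 1 - mmin * S 1 1))) =
      mmax • aVec ((T 0 1 - mmin * S 0 1) / (T 1 1 - mmin * S 1 1)) := by
  have := aVec_div_eq_smul_col (T - mmin • S) hdenom
  simp only [Matrix.sub_apply, Matrix.smul_apply, smul_eq_mul] at this
  rw [this, mulVec_smul, mulVec_smul, ← mulVec_single_one, mulVec_mulVec, mulVec_mulVec,
    mul_inv_mul_sub_smul_eq hS hchar, smul_mulVec, smul_comm]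

theorem stmt_8_general (n K L : ℝ) (hL : 0 ≤ L)
    (hnL : 0 < n - L)
    (S T : Matrix (Fin 2) (Fin 2) ℝ) (hS : S.PosDef)
    (mmin mmax : ℝ)
    (hmin : mmin ∈ spectrum ℝ (S⁻¹ * T)) (hmax : mmax ∈ spectrum ℝ (S⁻¹ * T))
    (hbounds : ∀ μ ∈ spectrum ℝ (S⁻¹ * T), mmin ≤ μ ∧ μ ≤ mmax)
    (hdenom : T 1 1 - mmin * S 1 1 ≠ 0) :
    letI βhat : ℝ := (T 0 1 - mmin * S 0 1) / (T 1 1 - mmin * S 1 1)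
    letI lamhat : ℝ := mmax - K / n
    letI ahat : Fin 2 → ℝ := aVec βhat
    letI Ωhat : Matrix (Fin 2) (Fin 2) ℝ :=
      (1 / (n - L)) • ((n - K - L) • S +
        n • (T - (lamhat / (ahat ⬝ᵥ S⁻¹.mulVec ahat)) • vecMulVec ahat ahat))
    IsUnit Ωhat.det →
      ahat ⬝ᵥ Ωhat⁻¹.mulVec ahat = ahat ⬝ᵥ S⁻¹.mulVec ahat := by
  intro hΩ
  set ahat := aVec ((T 0 1 - mmin * S 0 1) / (T 1 1 - mmin * S 1 1))
  have hSdet : IsUnit S.det := (isUnit_iff_isUnit_det S).mp hS.isUnit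
  have hTa : T *ᵥ (S⁻¹ *ᵥ ahat) = mmax • ahat := mulVec_inv_mulVec_aVec_liml hSdet
    ((S⁻¹ * T).charpoly_eq_of_extreme_eigenvalues hmin hmax hbounds) hdenom
  have hq : ahat ⬝ᵥ S⁻¹ *ᵥ ahat ≠ 0 := (hS.inv.dotProduct_mulVec_pos (aVec_ne_zero _)).ne'
  have hn : n ≠ 0 := by linarith
  exact congrArg (ahat ⬝ᵥ ·) (omegaHat_inv_mulVec hSdet hTa hq hn hnL.ne' hΩ)

/-- `âᵀ Ω̂⁻¹ â = âᵀ S⁻¹ â` for the RE covariance estimate `Ω̂`. -/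
theorem stmt_8 (n K L : ℝ) (hK : 0 < K) (hL : 0 ≤ L) (hν : 0 < n - K - L)
    (hnL : 0 < n - L)
    (S T : Matrix (Fin 2) (Fin 2) ℝ) (hS : S.PosDef) (hT : T.PosSemidef)
    (mmin mmax : ℝ)
    (hmin : mmin ∈ spectrum ℝ (S⁻¹ * T)) (hmax : mmax ∈ spectrum ℝ (S⁻¹ * T))
    (hbounds : ∀ μ ∈ spectrum ℝ (S⁻¹ * T), mmin ≤ μ ∧ μ ≤ mmax)
    (hdenom : T 1 1 - mmin * S 1 1 ≠ 0) :
    letI βhat : ℝ := (T 0 1 - mmin * S 0 1) / (T 1 1 - mmin * S 1 1)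
    letI lamhat : ℝ := mmax - K / n
    letI ahat : Fin 2 → ℝ := aVec βhat
    letI Ωhat : Matrix (Fin 2) (Fin 2) ℝ :=
      (1 / (n - L)) • ((n - K - L) • S +
        n • (T - (lamhat / (ahat ⬝ᵥ S⁻¹.mulVec ahat)) • vecMulVec ahat ahat))
    IsUnit Ωhat.det →
      ahat ⬝ᵥ Ωhat⁻¹.mulVec ahat = ahat ⬝ᵥ S⁻¹.mulVec ahat :=
  stmt_8_general n K L hL hnL S T hS mmin mmax hmin hmax hbounds hdenom
end

section
/- For each n let P_n be a symmetric n×n real matrix with entries p_ij (suppressing the dependence on n), and let (G_n) be a sequence of positive reals. Suppose there exists a constant C such that: (i) |trace(P_n^j)| ≤ C·G_n for all n and all j ∈ {1,2,3,4}; (ii) 0 ≤ (P_n^j)_{ii} ≤ C for all n, all i, and all j ∈ {1,2,3}; and (iii) Σ_{i=1}^n ( Σ_{j=1}^n p_ij² )² ≤ C·G_n for all n. Then there exists a constant C′ such that | Σ_{i<j<k<ℓ} p_ik·p_iℓ·p_jk·p_jℓ | ≤ C′·G_n for all n; that is, Σ_{i<j<k<ℓ} p_ik p_iℓ p_jk p_jℓ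 = O(G_n). -/
open Matrix Finset

set_option maxHeartbeats 4000000

namespace Stmt14

variable {n : ℕ}

abbrev Mat (n : ℕ) := Matrix (Fin n) (Fin n) ℝ

/-- strictly lower triangular predicate -/
def Lo (X : Mat n) : Prop := ∀ i j : Fin n, i ≤ j → X i j = 0
def Up (X : Mat n) : Prop := ∀ i j : Fin n, j ≤ i → X i j = 0

lemma Lo.mul {X Y : Mat n} (hX : Lo X) (hY : Lo Y) : Lo (X * Y) := by
  intro i j hij
  show ∑ k, X i k * Y k j = 0
  refine Finset.sum_eq_zero fun k _ => ?_
  rcases le_or_gt i k with h | h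
  · rw [hX i k h, zero_mul]
  · rw [hY k j (le_trans h.le hij), mul_zero]

lemma Up.mul {X Y : Mat n} (hX : Up X) (hY : Up Y) : Up (X * Y) := by
  intro i j hij
  show ∑ k, X i k * Y k j = 0
  refine Finset.sum_eq_zero fun k _ => ?_
  rcases le_or_gt k i with h | h
  · rw [hX i k h, zero_mul]
  · rw [hY k j (le_trans hij h.le), mul_zero]

lemma Lo.add {X Y : Mat n} (hX : Lo X) (hY : Lo Y) : Lo (X + Y) := by
  intro i j hij; show X i j + Y i j = 0; rw [hX i j hij, hY i j hij, add_zero]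

lemma Up.add {X Y : Mat n} (hX : Up X) (hY : Up Y) : Up (X + Y) := by
  intro i j hij; show X i j + Y i j = 0; rw [hX i j hij, hY i j hij, add_zero]

lemma Lo.trace_eq_zero {X : Mat n} (hX : Lo X) : trace X = 0 := by
  simp only [Matrix.trace, Matrix.diag]
  exact Finset.sum_eq_zero fun i _ => hX i i le_rfl

lemma Up.trace_eq_zero {X : Mat n} (hX : Up X) : trace X = 0 := by
  simp only [Matrix.trace, Matrix.diag]
  exact Finset.sum_eq_zero fun i _ => hX i i le_rfl

lemma Lo.trace_pow4 {X : Mat n} (hX : Lo X) : trace (X ^ 4) = 0 := by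
  have : X ^ 4 = X * X * X * X := by
    rw [show (4 : ℕ) = 3 + 1 from rfl, pow_succ, show (3 : ℕ) = 2 + 1 from rfl, pow_succ, sq]
  rw [this]
  exact (((hX.mul hX).mul hX).mul hX).trace_eq_zero

lemma Up.trace_pow4 {X : Mat n} (hX : Up X) : trace (X ^ 4) = 0 := by
  have : X ^ 4 = X * X * X * X := by
    rw [show (4 : ℕ) = 3 + 1 from rfl, pow_succ, show (3 : ℕ) = 2 + 1 from rfl, pow_succ, sq]
  rw [this]
  exact (((hX.mul hX).mul hX).mul hX).trace_eq_zero

/-- rotate a 4-letter trace word -/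
lemma rot4 (a b c d : Mat n) : trace (a * b * c * d) = trace (d * a * b * c) := by
  rw [trace_mul_comm (a * b * c) d]
  congr 1
  simp only [Matrix.mul_assoc]

lemma trace_mul_sum (X Y : Mat n) : trace (X * Y) = ∑ a, ∑ b, X a b * Y b a := by
  simp [Matrix.trace, Matrix.diag, Matrix.mul_apply]

lemma frob_nonneg (X : Mat n) : 0 ≤ trace (X * Xᵀ) := by
  rw [trace_mul_sum]
  refine Finset.sum_nonneg fun a _ => Finset.sum_nonneg fun b _ => ?_
  simp only [Matrix.transpose_apply]
  exact mul_self_nonneg _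

lemma frob_cs (X Y : Mat n) :
    (trace (X * Yᵀ)) ^ 2 ≤ trace (X * Xᵀ) * trace (Y * Yᵀ) := by
  have h : ∀ Z W : Mat n, trace (Z * Wᵀ) = ∑ p ∈ (univ ×ˢ univ : Finset (Fin n × Fin n)),
      Z p.1 p.2 * W p.1 p.2 := by
    intro Z W
    rw [trace_mul_sum, Finset.sum_product]
    simp [Matrix.transpose_apply]
  rw [h X Y, h X X, h Y Y]
  simpa [sq] using Finset.sum_mul_sq_le_sq_mul_sq (univ ×ˢ univ)
    (fun p => X p.1 p.2) (fun p => Y p.1 p.2)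

lemma split_pairs (f : Fin n → Fin n → ℝ) :
    (∑ a, ∑ b, f a b) = (∑ a, f a a)
      + ∑ a, ∑ b ∈ univ.filter (fun b => a < b), (f a b + f b a) := by
  have h1 : ∀ a : Fin n, (∑ b, f a b) = f a a + ∑ b ∈ univ.erase a, f a b :=
    fun a => (Finset.add_sum_erase univ (f a) (mem_univ a)).symm
  have h2 : ∀ a : Fin n, (univ.erase a).filter (fun b => a < b)
      = univ.filter (fun b => a < b) := by
    intro a
    ext b
    simp only [mem_filter, mem_erase, mem_univ, true_and, and_true]
    exact and_iff_right_iff_imp.mpr fun h => h.ne'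
  have h3 : ∀ a : Fin n, (univ.erase a).filter (fun b => ¬ a < b)
      = univ.filter (fun b => b < a) := by
    intro a
    ext b
    simp only [mem_filter, mem_erase, mem_univ, true_and, and_true]
    constructor
    · rintro ⟨hne, hnlt⟩; exact lt_of_le_of_ne (not_lt.mp hnlt) hne
    · intro h; exact ⟨h.ne, not_lt.mpr h.le⟩
  have h4 : (∑ a, ∑ b ∈ univ.filter (fun b => b < a), f a b)
      = ∑ a, ∑ b ∈ univ.filter (fun b => a < b), f b a := by
    refine Finset.sum_comm' ?_
    intro x y
    simp only [mem_univ, true_and, mem_filter, and_true]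
  calc (∑ a, ∑ b, f a b)
      = ∑ a, (f a a + ((∑ b ∈ (univ.erase a).filter (fun b => a < b), f a b)
          + ∑ b ∈ (univ.erase a).filter (fun b => ¬ a < b), f a b)) := by
        refine Finset.sum_congr rfl fun a _ => ?_
        rw [h1 a, Finset.sum_filter_add_sum_filter_not]
    _ = (∑ a, f a a) + ((∑ a, ∑ b ∈ univ.filter (fun b => a < b), f a b)
          + ∑ a, ∑ b ∈ univ.filter (fun b => b < a), f a b) := by
        rw [Finset.sum_add_distrib, Finset.sum_add_distrib]
        congr 1
        congr 1
        · exact Finset.sum_congr rfl fun a _ => by rw [h2 a]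
        · exact Finset.sum_congr rfl fun a _ => by rw [h3 a]
    _ = (∑ a, f a a) + ∑ a, ∑ b ∈ univ.filter (fun b => a < b), (f a b + f b a) := by
        rw [h4]
        congr 1
        rw [← Finset.sum_add_distrib]
        exact Finset.sum_congr rfl fun a _ => by rw [← Finset.sum_add_distrib]

def lo (A : Mat n) : Mat n := Matrix.of fun i j => if j < i then A i j else 0

def gg (A : Mat n) (a b c : Fin n) : ℝ :=
  (if a < c then A a c else 0) * (if b < c then A b c else 0)

set_option maxHeartbeats 2000000 in
lemma comb (A : Mat n) (hA : ∀ i j, A j i = A i j) :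
    trace (lo A * (lo A)ᵀ * lo A * (lo A)ᵀ) =
      (∑ a, (∑ c, gg A a a c) * (∑ d, gg A a a d))
      + ∑ a, ∑ b ∈ univ.filter (fun b => a < b),
          (2 * ∑ c, gg A a b c * gg A a b c
           + 4 * ∑ c ∈ univ.filter (fun c => b < c), ∑ d ∈ univ.filter (fun d => c < d),
               A a c * A a d * A b c * A b d) := by
  set l := lo A with hl
  set u := lᵀ with hu
  -- entry formula for u * l
  have hGm : ∀ a b, (u * l) a b = ∑ c, gg A a b c := by
    intro a b
    rw [Matrix.mul_apply]
    refine Finset.sum_congr rfl fun c _ => ?_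
    have h1 : u a c = l c a := rfl
    rw [h1]
    show (if a < c then A c a else 0) * (if b < c then A c b else 0) = gg A a b c
    rw [gg, hA a c, hA b c]
  have hggsymm : ∀ a b c, gg A b a c = gg A a b c := fun a b c => mul_comm _ _
  -- trace as double sum of H
  have h0 : trace (l * u * l * u) = ∑ a, ∑ b, (∑ c, gg A a b c) * (∑ d, gg A a b d) := by
    rw [rot4 l u l u, show u * l * u * l = (u * l) * (u * l) from by noncomm_ring,
      trace_mul_sum]
    refine Finset.sum_congr rfl fun a _ => Finset.sum_congr rfl fun b _ => ?_
    rw [hGm a b, hGm b a]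
    congr 1
    exact Finset.sum_congr rfl fun d _ => hggsymm a b d
  rw [h0, split_pairs]
  congr 1
  refine Finset.sum_congr rfl fun a _ => Finset.sum_congr rfl fun b hb => ?_
  have hab : a < b := (Finset.mem_filter.mp hb).2
  -- pointwise key lemma
  have key : ∀ c d : Fin n, c < d →
      gg A a b c * gg A a b d = if b < c then A a c * A a d * A b c * A b d else 0 := by
    intro c d hcd
    by_cases hbc : b < c
    · have hac : a < c := hab.trans hbc
      have had : a < d := hac.trans hcd
      have hbd : b < d := hbc.trans hcd
      rw [if_pos hbc, gg, gg, if_pos hac, if_pos hbc, if_pos had, if_pos hbd]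
      ring
    · rw [if_neg hbc, gg, if_neg hbc, mul_zero, zero_mul]
  have hf : ∀ a' b' : Fin n, a' < b' → (∑ c, gg A a' b' c) * (∑ d, gg A a' b' d)
      = (∑ c, gg A a' b' c * gg A a' b' c)
        + 2 * ∑ c ∈ univ.filter (fun c => b' < c), ∑ d ∈ univ.filter (fun d => c < d),
            A a' c * A a' d * A b' c * A b' d := by
    intro a' b' hab'
    have key' : ∀ c d : Fin n, c < d →
        gg A a' b' c * gg A a' b' d = if b' < c then A a' c * A a' d * A b' c * A b' d else 0 := by
      intro c d hcd
      by_cases hbc : b' < c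
      · have hac : a' < c := hab'.trans hbc
        have had : a' < d := hac.trans hcd
        have hbd : b' < d := hbc.trans hcd
        rw [if_pos hbc, gg, gg, if_pos hac, if_pos hbc, if_pos had, if_pos hbd]
        ring
      · rw [if_neg hbc, gg, if_neg hbc, mul_zero, zero_mul]
    calc (∑ c, gg A a' b' c) * (∑ d, gg A a' b' d)
        = ∑ c, ∑ d, gg A a' b' c * gg A a' b' d := Finset.sum_mul_sum _ _ _ _
      _ = (∑ c, gg A a' b' c * gg A a' b' c)
          + ∑ c, ∑ d ∈ univ.filter (fun d => c < d),
              (gg A a' b' c * gg A a' b' d + gg A a' b' d * gg A a' b' c) :=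
          split_pairs _
      _ = (∑ c, gg A a' b' c * gg A a' b' c)
          + 2 * ∑ c ∈ univ.filter (fun c => b' < c), ∑ d ∈ univ.filter (fun d => c < d),
              A a' c * A a' d * A b' c * A b' d := by
          congr 1
          have step1 : ∀ c : Fin n, (∑ d ∈ univ.filter (fun d => c < d),
              (gg A a' b' c * gg A a' b' d + gg A a' b' d * gg A a' b' c))
              = if b' < c then 2 * ∑ d ∈ univ.filter (fun d => c < d),
                  A a' c * A a' d * A b' c * A b' d else 0 := by
            intro c
            have : ∀ d ∈ univ.filter (fun d => c < d),
                gg A a' b' c * gg A a' b' d + gg A a' b' d * gg A a' b' c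
                = if b' < c then 2 * (A a' c * A a' d * A b' c * A b' d) else 0 := by
              intro d hd
              have hcd : c < d := (Finset.mem_filter.mp hd).2
              rw [mul_comm (gg A a' b' d) (gg A a' b' c), key' c d hcd]
              split_ifs <;> ring
            rw [Finset.sum_congr rfl this, Finset.sum_ite_irrel, Finset.sum_const_zero,
              Finset.mul_sum]
          rw [Finset.sum_congr rfl (fun c _ => step1 c), ← Finset.sum_filter,
            Finset.mul_sum]
  rw [hf a b hab]
  have hswap : (∑ c, gg A b a c) * (∑ d, gg A b a d)
      = (∑ c, gg A a b c) * (∑ d, gg A a b d) := by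
    congr 1 <;> exact Finset.sum_congr rfl fun c _ => hggsymm a b c
  rw [hswap, hf a b hab]
  ring

set_option maxHeartbeats 4000000 in
lemma x_bound {l u : Mat n} (hl : Lo l) (hu : u = lᵀ) :
    4 * trace (l * u * l * u) ≤ 37 * trace ((l + u) ^ 4) ∧ 0 ≤ trace (l * u * l * u) := by
  have hup : Up u := by intro i j hij; rw [hu]; exact hl j i hij
  set s := l + u with hs
  set k := u - l with hk
  set x := trace (l * u * l * u) with hxd
  set y := trace (l * l * u * u) with hyd
  set τ := trace (s ^ 4) with hτd
  set t := trace (k ^ 4) with htd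
  have hsT : sᵀ = s := by
    rw [hs, hu, Matrix.transpose_add, Matrix.transpose_transpose, add_comm]
  have hkT : kᵀ = -k := by
    rw [hk, hu, Matrix.transpose_sub, Matrix.transpose_transpose, neg_sub]
  -- nonnegativity of x and y
  have hx0 : 0 ≤ x := by
    have h1 : l * u * l * u = (l * u) * ((l * u)ᵀ) := by
      rw [Matrix.transpose_mul, hu, Matrix.transpose_transpose, ← hu]
      noncomm_ring
    rw [hxd, h1]; exact frob_nonneg _
  have hy0 : 0 ≤ y := by
    have h1 : l * l * u * u = (l * l) * ((l * l)ᵀ) := by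
      rw [Matrix.transpose_mul, ← hu]
      noncomm_ring
    rw [hyd, h1]; exact frob_nonneg _
  -- identity 1 : τ + t = 4x + 8y
  have e1 : s ^ 4 + k ^ 4 =
      (l*l*l*l + l*l*l*l) + (u*u*u*u + u*u*u*u)
      + ((l*l*u*u + l*l*u*u) + (l*u*l*u + l*u*l*u) + (l*u*u*l + l*u*u*l)
        + (u*l*l*u + u*l*l*u) + (u*l*u*l + u*l*u*l) + (u*u*l*l + u*u*l*l)) := by
    rw [hs, hk]; noncomm_ring
  have hLw : trace (l*l*l*l) = 0 := by
    have : l*l*l*l = l ^ 4 := by noncomm_ring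
    rw [this]; exact hl.trace_pow4
  have hUw : trace (u*u*u*u) = 0 := by
    have : u*u*u*u = u ^ 4 := by noncomm_ring
    rw [this]; exact hup.trace_pow4
  have r1 : trace (l*u*u*l) = y := by rw [hyd, rot4 l u u l]
  have r2 : trace (u*u*l*l) = y := by rw [rot4 u u l l, r1]
  have r3 : trace (u*l*l*u) = y := by rw [rot4 u l l u, r2]
  have r4 : trace (u*l*u*l) = x := by rw [hxd, rot4 u l u l]
  have h1 : τ + t = 4 * x + 8 * y := by
    have := congrArg trace e1
    simp only [trace_add] at this
    rw [hLw, hUw, r1, r2, r3, r4] at this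
    rw [hτd, htd]; linarith [this]
  -- identity 2 : 0 = 2τ + 2t + 8β' + 4W
  have hz1 : trace ((s + k) ^ 4) = 0 := by
    rw [show s + k = u + u from by rw [hs, hk]; abel]
    exact (hup.add hup).trace_pow4
  have hz2 : trace ((s - k) ^ 4) = 0 := by
    rw [show s - k = l + l from by rw [hs, hk]; abel]
    exact (hl.add hl).trace_pow4
  have e2 : (s + k) ^ 4 + (s - k) ^ 4 =
      (s*s*s*s + s*s*s*s) + (k*k*k*k + k*k*k*k)
      + ((s*s*k*k + s*s*k*k) + (s*k*s*k + s*k*s*k) + (s*k*k*s + s*k*k*s)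
        + (k*s*s*k + k*s*s*k) + (k*s*k*s + k*s*k*s) + (k*k*s*s + k*k*s*s)) := by
    noncomm_ring
  set β' := trace (s*s*k*k) with hβ'd
  set W := trace (s*k*s*k) with hWd
  have q1 : trace (s*k*k*s) = β' := by rw [hβ'd, rot4 s k k s]
  have q2 : trace (k*k*s*s) = β' := by rw [rot4 k k s s, q1]
  have q3 : trace (k*s*s*k) = β' := by rw [rot4 k s s k, q2]
  have q4 : trace (k*s*k*s) = W := by rw [hWd, rot4 k s k s]
  have hsw : trace (s*s*s*s) = τ := by
    rw [hτd]; congr 1; noncomm_ring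
  have hkw : trace (k*k*k*k) = t := by
    rw [htd]; congr 1; noncomm_ring
  have h2 : 0 = 2*τ + 2*t + 8*β' + 4*W := by
    have := congrArg trace e2
    simp only [trace_add] at this
    rw [hz1, hz2, hsw, hkw, q1, q2, q3, q4] at this
    linarith [this]
  -- β = -β'
  set β := trace (s*s*(k*kᵀ)) with hβd
  have hββ' : β = -β' := by
    have h3 : s*s*(k*kᵀ) = -(s*s*k*k) := by rw [hkT]; noncomm_ring
    rw [hβd, h3, trace_neg, hβ'd]
  -- Cauchy-Schwarz : β² ≤ τ * t
  have hkkT : (k*kᵀ)ᵀ = k*kᵀ := by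
    rw [Matrix.transpose_mul, Matrix.transpose_transpose]
  have hXX : trace ((s*s) * (s*s)ᵀ) = τ := by
    rw [Matrix.transpose_mul, hsT, hτd]; congr 1; noncomm_ring
  have hYY : trace ((k*kᵀ) * (k*kᵀ)ᵀ) = t := by
    rw [hkkT, htd]
    congr 1
    rw [hkT]; noncomm_ring
  have hXY : trace ((s*s) * (k*kᵀ)ᵀ) = β := by rw [hkkT, hβd]
  have hβ2 : β ^ 2 ≤ τ * t := by
    have := frob_cs (s*s) (k*kᵀ)
    rw [hXX, hYY, hXY] at this; exact this
  -- |W| ≤ β and β ≥ 0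
  have hZZT : trace ((s*k) * (s*k)ᵀ) = β := by
    have h4 : (s*k) * (s*k)ᵀ = s*k*kᵀ*s := by
      rw [Matrix.transpose_mul, hsT]; noncomm_ring
    rw [h4, rot4 s k kᵀ s, hβd]; congr 1; noncomm_ring
  have hβ0 : 0 ≤ β := hZZT ▸ frob_nonneg (s*k)
  have hW2 : W ^ 2 ≤ β ^ 2 := by
    have h5 := frob_cs (s*k) ((s*k)ᵀ)
    rw [Matrix.transpose_transpose] at h5
    have h6 : trace ((s*k) * (s*k)) = W := by rw [hWd]; congr 1; noncomm_ring
    have h7 : trace ((s*k)ᵀ * (s*k)) = β := by rw [trace_mul_comm, hZZT]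
    rw [h6, h7, hZZT] at h5
    calc W ^ 2 ≤ β * β := h5
    _ = β ^ 2 := (sq β).symm
  have hWge : -β ≤ W := by nlinarith [hW2, hβ0]
  have hτ0 : 0 ≤ τ := hXX ▸ frob_nonneg (s*s)
  have ht0 : 0 ≤ t := hYY ▸ frob_nonneg (k*kᵀ)
  -- assemble : t ≤ 36 τ
  have h6 : t + τ ≤ 6 * β := by linarith [h2, hββ', hWge]
  have hsq : (t + τ) ^ 2 ≤ 36 * (τ * t) := by
    nlinarith [mul_self_le_mul_self (by linarith : (0:ℝ) ≤ t + τ) h6, hβ2]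
  have ht36 : t ≤ 36 * τ := by
    nlinarith [hsq, ht0, hτ0, mul_nonneg hτ0 ht0]
  constructor
  · linarith [h1, hy0, ht36]
  · exact hx0

set_option maxHeartbeats 4000000 in
lemma tau_le {A : Mat n} (hA : ∀ i j, A j i = A i j) {C G : ℝ}
    (hC : 0 ≤ C) (hG : 0 ≤ G)
    (ht1 : trace A ≤ C * G) (ht2 : trace (A ^ 2) ≤ C * G) (ht4 : trace (A ^ 4) ≤ C * G)
    (hd1 : ∀ i, 0 ≤ A i i ∧ A i i ≤ C) (hd2 : ∀ i, (A ^ 2) i i ≤ C)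
    (hd3 : ∀ i, 0 ≤ (A ^ 3) i i ∧ (A ^ 3) i i ≤ C) :
    trace ((A - diagonal (Matrix.diag A)) ^ 4) ≤ (C + 6 * C ^ 3 + C ^ 4) * G := by
  set d : Fin n → ℝ := Matrix.diag A with hd
  set Dg : Mat n := diagonal d with hDg
  have hdi : ∀ i, d i = A i i := fun i => rfl
  have e : (A - Dg) ^ 4 =
      A*A*A*A - A*A*A*Dg - A*A*Dg*A - A*Dg*A*A - Dg*A*A*A
      + A*A*Dg*Dg + A*Dg*A*Dg + A*Dg*Dg*A + Dg*A*A*Dg + Dg*A*Dg*A + Dg*Dg*A*A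
      - A*Dg*Dg*Dg - Dg*A*Dg*Dg - Dg*Dg*A*Dg - Dg*Dg*Dg*A + Dg*Dg*Dg*Dg := by
    noncomm_ring
  have htr := congrArg trace e
  simp only [trace_sub, trace_add] at htr
  -- rotations
  have r1 : trace (A*A*Dg*A) = trace (A*A*A*Dg) := by rw [rot4]
  have r2 : trace (A*Dg*A*A) = trace (A*A*A*Dg) := by rw [rot4, r1]
  have r3 : trace (Dg*A*A*A) = trace (A*A*A*Dg) := by rw [rot4, r2]
  have r4 : trace (A*Dg*Dg*A) = trace (A*A*Dg*Dg) := by rw [rot4]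
  have r5 : trace (Dg*Dg*A*A) = trace (A*A*Dg*Dg) := by rw [rot4, r4]
  have r6 : trace (Dg*A*A*Dg) = trace (A*A*Dg*Dg) := by rw [rot4, r5]
  have r7 : trace (Dg*A*Dg*A) = trace (A*Dg*A*Dg) := by rw [rot4]
  have r8 : trace (Dg*Dg*Dg*A) = trace (A*Dg*Dg*Dg) := by rw [rot4]
  have r9 : trace (Dg*Dg*A*Dg) = trace (A*Dg*Dg*Dg) := by rw [rot4, r8]
  have r10 : trace (Dg*A*Dg*Dg) = trace (A*Dg*Dg*Dg) := by rw [rot4, r9]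
  rw [r1, r2, r3, r4, r5, r6, r7, r8, r9, r10] at htr
  -- evaluate words
  have hT0 : trace (A*A*A*A) = trace (A ^ 4) := by congr 1; noncomm_ring
  have hT1 : trace (A*A*A*Dg) = ∑ i, (A ^ 3) i i * d i := by
    rw [show A*A*A*Dg = A ^ 3 * Dg from by noncomm_ring, hDg]
    simp [Matrix.trace, Matrix.diag, Matrix.mul_diagonal]
  have hT2 : trace (A*A*Dg*Dg) = ∑ i, (A ^ 2) i i * (d i * d i) := by
    rw [show A*A*Dg*Dg = A ^ 2 * (Dg * Dg) from by noncomm_ring, hDg,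
      diagonal_mul_diagonal]
    simp [Matrix.trace, Matrix.diag, Matrix.mul_diagonal]
  have hT3 : trace (A*Dg*A*Dg) = ∑ a, ∑ b, (A a b)^2 * (d a * d b) := by
    rw [show A*Dg*A*Dg = (A*Dg) * (A*Dg) from by noncomm_ring, trace_mul_sum]
    refine Finset.sum_congr rfl fun a _ => Finset.sum_congr rfl fun b _ => ?_
    rw [hDg, Matrix.mul_diagonal, Matrix.mul_diagonal, hA a b]
    ring
  have hT4 : trace (A*Dg*Dg*Dg) = ∑ i, d i ^ 4 := by
    rw [show A*Dg*Dg*Dg = A * (Dg * (Dg * Dg)) from by noncomm_ring, hDg,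
      diagonal_mul_diagonal, diagonal_mul_diagonal]
    simp only [Matrix.trace, Matrix.diag, Matrix.mul_diagonal]
    refine Finset.sum_congr rfl fun i _ => ?_
    rw [← hdi i]; ring
  have hT5 : trace (Dg*Dg*Dg*Dg) = ∑ i, d i ^ 4 := by
    rw [show Dg*Dg*Dg*Dg = (Dg * Dg) * (Dg * Dg) from by noncomm_ring, hDg,
      diagonal_mul_diagonal, diagonal_mul_diagonal]
    simp only [Matrix.trace, Matrix.diag, Matrix.diagonal_apply_eq]
    refine Finset.sum_congr rfl fun i _ => ?_
    ring
  rw [hT0, hT1, hT2, hT3, hT4, hT5] at htr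
  -- bounds on each sum
  have hdn : ∀ i, 0 ≤ d i ∧ d i ≤ C := fun i => (hdi i) ▸ hd1 i
  have hB1 : 0 ≤ ∑ i, (A ^ 3) i i * d i :=
    Finset.sum_nonneg fun i _ => mul_nonneg (hd3 i).1 (hdn i).1
  have htrA : trace A = ∑ i, d i := by
    simp [Matrix.trace, Matrix.diag, hdi]
  have hsumd : ∑ i, d i ≤ C * G := htrA ▸ ht1
  have hsumd0 : ∀ i, 0 ≤ d i := fun i => (hdn i).1
  have hB2 : ∑ i, (A ^ 2) i i * (d i * d i) ≤ C ^ 2 * (C * G) := by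
    calc ∑ i, (A ^ 2) i i * (d i * d i) ≤ ∑ i, C ^ 2 * d i := by
          refine Finset.sum_le_sum fun i _ => ?_
          have h1 := hd2 i
          have h2 := hdn i
          have h3 : 0 ≤ (A ^ 2) i i := by
            have h4 : (A ^ 2) i i = ∑ j, A i j * A j i := by
              rw [show A ^ 2 = A * A from sq A, Matrix.mul_apply]
            rw [h4]
            refine Finset.sum_nonneg fun j _ => ?_
            rw [hA i j]; exact mul_self_nonneg _
          have hdd : d i * d i ≤ C * d i := by nlinarith [h2.1, h2.2]
          calc (A ^ 2) i i * (d i * d i) ≤ C * (d i * d i) :=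
                mul_le_mul_of_nonneg_right h1 (mul_nonneg h2.1 h2.1)
            _ ≤ C * (C * d i) := mul_le_mul_of_nonneg_left hdd hC
            _ = C ^ 2 * d i := by ring
      _ = C ^ 2 * ∑ i, d i := by rw [Finset.mul_sum]
      _ ≤ C ^ 2 * (C * G) := by
          exact mul_le_mul_of_nonneg_left hsumd (by positivity)
  have htr2 : trace (A ^ 2) = ∑ a, ∑ b, (A a b) ^ 2 := by
    rw [show A ^ 2 = A * A from sq A, trace_mul_sum]
    exact Finset.sum_congr rfl fun a _ => Finset.sum_congr rfl fun b _ => by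
      rw [hA a b]; ring
  have hB3 : ∑ a, ∑ b, (A a b)^2 * (d a * d b) ≤ C ^ 2 * (C * G) := by
    calc ∑ a, ∑ b, (A a b)^2 * (d a * d b) ≤ ∑ a, ∑ b, C ^ 2 * (A a b) ^ 2 := by
          refine Finset.sum_le_sum fun a _ => Finset.sum_le_sum fun b _ => ?_
          have h2 := hdn a; have h3 := hdn b
          have hdd : d a * d b ≤ C * C := mul_le_mul h2.2 h3.2 h3.1 hC
          calc A a b ^ 2 * (d a * d b) ≤ A a b ^ 2 * (C * C) :=
                mul_le_mul_of_nonneg_left hdd (sq_nonneg _)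
            _ = C ^ 2 * A a b ^ 2 := by ring
      _ = C ^ 2 * trace (A ^ 2) := by
          rw [htr2]; simp_rw [Finset.mul_sum]
      _ ≤ C ^ 2 * (C * G) := mul_le_mul_of_nonneg_left ht2 (by positivity)
  have hB4 : 0 ≤ ∑ i, d i ^ 4 := Finset.sum_nonneg fun i _ => by positivity
  have hB5 : ∑ i, d i ^ 4 ≤ C ^ 3 * (C * G) := by
    calc ∑ i, d i ^ 4 ≤ ∑ i, C ^ 3 * d i := by
          refine Finset.sum_le_sum fun i _ => ?_
          have h2 := hdn i
          have hdd : d i * d i ≤ C * d i := by nlinarith [h2.1, h2.2]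
          calc d i ^ 4 = (d i * d i) * (d i * d i) := by ring
            _ ≤ (C * d i) * (C * d i) :=
                mul_le_mul hdd hdd (mul_nonneg h2.1 h2.1) (mul_nonneg hC h2.1)
            _ = C ^ 2 * (d i * d i) := by ring
            _ ≤ C ^ 2 * (C * d i) := mul_le_mul_of_nonneg_left hdd (by positivity)
            _ = C ^ 3 * d i := by ring
      _ = C ^ 3 * ∑ i, d i := by rw [Finset.mul_sum]
      _ ≤ C ^ 3 * (C * G) := mul_le_mul_of_nonneg_left hsumd (by positivity)
  rw [htr]
  nlinarith [hB1, hB2, hB3, hB4, hB5, ht4]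

lemma goal_reindex (A : Mat n) :
    (∑ t ∈ Finset.univ.filter
        (fun t : Fin n × Fin n × Fin n × Fin n =>
          t.1 < t.2.1 ∧ t.2.1 < t.2.2.1 ∧ t.2.2.1 < t.2.2.2),
        A t.1 t.2.2.1 * A t.1 t.2.2.2 * A t.2.1 t.2.2.1 * A t.2.1 t.2.2.2)
      = ∑ a, ∑ b ∈ univ.filter (fun b => a < b), ∑ c ∈ univ.filter (fun c => b < c),
          ∑ d ∈ univ.filter (fun d => c < d), A a c * A a d * A b c * A b d := by
  rw [Finset.sum_filter]
  simp only [Fintype.sum_prod_type]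
  simp only [Finset.sum_filter, ite_and, Finset.sum_ite_irrel, Finset.sum_const_zero]

lemma lo_lo (A : Mat n) : Lo (lo A) := by
  intro i j hij
  show (if j < i then A i j else 0) = 0
  rw [if_neg (not_lt.mpr hij)]

lemma lo_add_transpose (A : Mat n) (hA : ∀ i j, A j i = A i j) :
    lo A + (lo A)ᵀ = A - diagonal (Matrix.diag A) := by
  ext i j
  simp only [Matrix.add_apply, Matrix.transpose_apply, Matrix.sub_apply]
  show (if j < i then A i j else 0) + (if i < j then A j i else 0)
      = A i j - diagonal (Matrix.diag A) i j
  rcases lt_trichotomy i j with h | h | h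
  · rw [if_neg (asymm h), if_pos h, Matrix.diagonal_apply_ne _ (ne_of_lt h), hA i j]
    ring
  · subst h
    rw [if_neg (lt_irrefl i), Matrix.diagonal_apply_eq]
    show (0:ℝ) + 0 = A i i - Matrix.diag A i
    simp [Matrix.diag]
  · rw [if_pos h, if_neg (asymm h), Matrix.diagonal_apply_ne _ (ne_of_gt h)]
    ring

lemma gg_diag_nonneg (A : Mat n) (a c : Fin n) : 0 ≤ gg A a a c := by
  rw [gg]; split_ifs with h
  · exact mul_self_nonneg _
  · simp
lemma gg_diag_le (A : Mat n) (a c : Fin n) : gg A a a c ≤ (A a c) ^ 2 := by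
  rw [gg]; split_ifs with h
  · exact le_of_eq (sq _).symm
  · simpa using sq_nonneg (A a c)
lemma gg_sq_le (A : Mat n) (a b c : Fin n) :
    gg A a b c * gg A a b c ≤ (A a c) ^ 2 * (A b c) ^ 2 := by
  have h : gg A a b c * gg A a b c
      = (if a < c then A a c else 0) ^ 2 * (if b < c then A b c else 0) ^ 2 := by
    rw [gg]; ring
  have e1 : (if a < c then A a c else 0) ^ 2 ≤ (A a c) ^ 2 := by
    split_ifs with h1
    · exact le_rfl
    · simpa using sq_nonneg (A a c)
  have e2 : (if b < c then A b c else 0) ^ 2 ≤ (A b c) ^ 2 := by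
    split_ifs with h1
    · exact le_rfl
    · simpa using sq_nonneg (A b c)
  rw [h]
  exact mul_le_mul e1 e2 (sq_nonneg _) (sq_nonneg _)

lemma rowsq_reorder (A : Mat n) (hA : ∀ i j, A j i = A i j) :
    (∑ a, ∑ b, ∑ c, (A a c) ^ 2 * (A b c) ^ 2) = ∑ c, (∑ j, (A c j) ^ 2) ^ 2 := by
  have h1 : ∀ a : Fin n, (∑ b, ∑ c, (A a c) ^ 2 * (A b c) ^ 2)
      = ∑ c, (A a c) ^ 2 * ∑ b, (A b c) ^ 2 := by
    intro a
    rw [Finset.sum_comm]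
    exact Finset.sum_congr rfl fun c _ => (Finset.mul_sum _ _ _).symm
  rw [Finset.sum_congr rfl fun a _ => h1 a, Finset.sum_comm]
  refine Finset.sum_congr rfl fun c _ => ?_
  rw [← Finset.sum_mul]
  have h2 : (∑ a, (A a c) ^ 2) = ∑ j, (A c j) ^ 2 :=
    Finset.sum_congr rfl fun a _ => by rw [hA a c]
  rw [h2, sq]

lemma E2_bound (A : Mat n) {R : ℝ} (hrowA : ∑ i, (∑ j, (A i j) ^ 2) ^ 2 ≤ R) :
    (∑ a, (∑ c, gg A a a c) * (∑ d, gg A a a d)) ≤ R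
    ∧ 0 ≤ (∑ a, (∑ c, gg A a a c) * (∑ d, gg A a a d)) := by
  constructor
  · refine le_trans (Finset.sum_le_sum fun a _ => ?_) hrowA
    have q0 : 0 ≤ ∑ c, gg A a a c := Finset.sum_nonneg fun c _ => gg_diag_nonneg A a c
    have qle : (∑ c, gg A a a c) ≤ ∑ j, (A a j) ^ 2 :=
      Finset.sum_le_sum fun c _ => gg_diag_le A a c
    calc (∑ c, gg A a a c) * (∑ d, gg A a a d)
        ≤ (∑ j, (A a j) ^ 2) * (∑ j, (A a j) ^ 2) :=
          mul_le_mul qle qle q0 (le_trans q0 qle)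
      _ = (∑ j, (A a j) ^ 2) ^ 2 := (sq _).symm
  · exact Finset.sum_nonneg fun a _ => mul_nonneg
      (Finset.sum_nonneg fun c _ => gg_diag_nonneg A a c)
      (Finset.sum_nonneg fun d _ => gg_diag_nonneg A a d)

lemma E1_bound (A : Mat n) (hA : ∀ i j, A j i = A i j) {R : ℝ}
    (hrowA : ∑ i, (∑ j, (A i j) ^ 2) ^ 2 ≤ R) :
    (∑ a, ∑ b ∈ univ.filter (fun b => a < b), 2 * ∑ c, gg A a b c * gg A a b c) ≤ R
    ∧ 0 ≤ (∑ a, ∑ b ∈ univ.filter (fun b => a < b), 2 * ∑ c, gg A a b c * gg A a b c) := by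
  set h' : Fin n → Fin n → ℝ := fun a b => ∑ c, (A a c) ^ 2 * (A b c) ^ 2 with hh'
  have hstep : (∑ a, ∑ b ∈ univ.filter (fun b => a < b), 2 * ∑ c, gg A a b c * gg A a b c)
      ≤ ∑ a, ∑ b ∈ univ.filter (fun b => a < b), (h' a b + h' b a) := by
    refine Finset.sum_le_sum fun a _ => Finset.sum_le_sum fun b _ => ?_
    have hle : (∑ c, gg A a b c * gg A a b c) ≤ h' a b :=
      Finset.sum_le_sum fun c _ => gg_sq_le A a b c
    have hsym : h' b a = h' a b := Finset.sum_congr rfl fun c _ => mul_comm _ _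
    rw [hsym]; linarith [hle]
  have hsp := split_pairs h'
  have hdiag0 : 0 ≤ ∑ a, h' a a :=
    Finset.sum_nonneg fun a _ => Finset.sum_nonneg fun c _ => by positivity
  have htot : (∑ a, ∑ b, h' a b) = ∑ c, (∑ j, (A c j) ^ 2) ^ 2 := rowsq_reorder A hA
  constructor
  · refine le_trans hstep (le_trans ?_ (le_trans (le_of_eq htot) hrowA))
    linarith [hsp]
  · refine Finset.sum_nonneg fun a _ => Finset.sum_nonneg fun b _ => ?_
    have : 0 ≤ ∑ c, gg A a b c * gg A a b c :=
      Finset.sum_nonneg fun c _ => mul_self_nonneg _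
    linarith

end Stmt14

open Stmt14 in
/-- if `trace(P_n^j) = O(G_n)` for `j ≤ 4`, diagonal entries of
`P_n^j` lie in `[0, C]` for `j ≤ 3`, and `Σᵢ(Σⱼ p_ij²)² = O(G_n)`, then
`Σ_{i<j<k<ℓ} p_ik p_iℓ p_jk p_jℓ = O(G_n)`. -/
theorem stmt_14 (P : ∀ n : ℕ, Matrix (Fin n) (Fin n) ℝ)
    (hsymm : ∀ n, (P n).IsSymm) (G : ℕ → ℝ) (hG : ∀ n, 0 < G n)
    (C : ℝ)
    (htrace : ∀ n, ∀ j ∈ Finset.Icc 1 4, |((P n) ^ j).trace| ≤ C * G n)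
    (hdiag : ∀ n, ∀ i : Fin n, ∀ j ∈ Finset.Icc 1 3,
      0 ≤ ((P n) ^ j) i i ∧ ((P n) ^ j) i i ≤ C)
    (hrow : ∀ n, ∑ i : Fin n, (∑ j : Fin n, (P n i j) ^ 2) ^ 2 ≤ C * G n) :
    ∃ C' : ℝ, ∀ n,
      |∑ t ∈ Finset.univ.filter
          (fun t : Fin n × Fin n × Fin n × Fin n =>
            t.1 < t.2.1 ∧ t.2.1 < t.2.2.1 ∧ t.2.2.1 < t.2.2.2),
          P n t.1 t.2.2.1 * P n t.1 t.2.2.2 * P n t.2.1 t.2.2.1 * P n t.2.1 t.2.2.2|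
        ≤ C' * G n := by
  have hC0 : 0 ≤ C := by
    have h := hrow 0
    simp only [Finset.univ_eq_empty, Finset.sum_empty] at h
    nlinarith [hG 0, h]
  refine ⟨3 * (C + 6 * C ^ 3 + C ^ 4) + C, fun n => ?_⟩
  set A : Mat n := P n with hAdef
  have hA : ∀ i j, A j i = A i j := (hsymm n).apply
  -- trace hypotheses
  have mem1 : (1:ℕ) ∈ Finset.Icc 1 4 := by decide
  have mem2 : (2:ℕ) ∈ Finset.Icc 1 4 := by decide
  have mem4 : (4:ℕ) ∈ Finset.Icc 1 4 := by decide
  have ht1 : trace A ≤ C * G n := by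
    have h := htrace n 1 mem1
    rw [pow_one] at h
    exact (le_abs_self _).trans h
  have ht2 : trace (A ^ 2) ≤ C * G n := (le_abs_self _).trans (htrace n 2 mem2)
  have ht4 : trace (A ^ 4) ≤ C * G n := (le_abs_self _).trans (htrace n 4 mem4)
  have hd1 : ∀ i, 0 ≤ A i i ∧ A i i ≤ C := by
    intro i
    have h := hdiag n i 1 (by decide)
    rwa [pow_one] at h
  have hd2 : ∀ i, (A ^ 2) i i ≤ C := fun i => (hdiag n i 2 (by decide)).2
  have hd3 : ∀ i, 0 ≤ (A ^ 3) i i ∧ (A ^ 3) i i ≤ C := fun i => hdiag n i 3 (by decide)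
  -- tau bound
  have hτ : trace ((lo A + (lo A)ᵀ) ^ 4) ≤ (C + 6 * C ^ 3 + C ^ 4) * G n := by
    rw [lo_add_transpose A hA]
    exact tau_le hA hC0 (le_of_lt (hG n)) ht1 ht2 ht4 hd1 hd2 hd3
  -- x bound
  obtain ⟨hx37, hx0⟩ := x_bound (lo_lo A) (rfl : (lo A)ᵀ = (lo A)ᵀ)
  set x := trace (lo A * (lo A)ᵀ * lo A * (lo A)ᵀ) with hxdef
  -- combinatorial identity
  have hcomb := comb A hA
  set E2 := (∑ a, (∑ c, gg A a a c) * (∑ d, gg A a a d)) with hE2def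
  set Snest := (∑ a, ∑ b ∈ univ.filter (fun b => a < b), ∑ c ∈ univ.filter (fun c => b < c),
      ∑ d ∈ univ.filter (fun d => c < d), A a c * A a d * A b c * A b d) with hSdef
  set E1 := (∑ a, ∑ b ∈ univ.filter (fun b => a < b), 2 * ∑ c, gg A a b c * gg A a b c)
    with hE1def
  have hsplit : x = E2 + (E1 + 4 * Snest) := by
    rw [hxdef, hcomb]
    congr 1
    rw [hE1def, hSdef, Finset.mul_sum, ← Finset.sum_add_distrib]
    refine Finset.sum_congr rfl fun a _ => ?_
    rw [Finset.mul_sum, ← Finset.sum_add_distrib]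
  obtain ⟨hE2u, hE2l⟩ := E2_bound A (hrow n)
  obtain ⟨hE1u, hE1l⟩ := E1_bound A hA (hrow n)
  -- final assembly
  rw [goal_reindex A, ← hSdef]
  have hKG : 0 ≤ (C + 6 * C ^ 3 + C ^ 4) * G n := by
    have := hG n
    have h3 : (0:ℝ) ≤ C ^ 3 := by positivity
    have h4 : (0:ℝ) ≤ C ^ 4 := by positivity
    nlinarith
  rw [abs_le]
  constructor
  · nlinarith [hsplit, hx0, hE1u, hE2u, hKG, hG n]
  · nlinarith [hsplit, hx37, hτ, hE1l, hE2l, hKG]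
end

section
/- Let P be a symmetric n×n real matrix with entries p_ij and let D = diag(P) be the diagonal matrix with the same diagonal as P. Then trace((P − D)⁴) = 2·Σ_{i<j} p_ij⁴ + 4·Σ_{i<j<ℓ} ( p_ij²p_iℓ² + p_ij²p_jℓ² + p_iℓ²p_jℓ² ) + 8·Σ_{i<j<k<ℓ} ( p_ik p_iℓ p_jk p_jℓ + p_ij p_iℓ p_jk p_kℓ + p_ij p_ik p_jℓ p_kℓ ). -/
open Matrix Finset

lemma sort_comp {k n : ℕ} {h : Fin k → Fin n} (hh : StrictMono h) (τ : Equiv.Perm (Fin k)) :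
    Tuple.sort (h ∘ ⇑τ) = τ⁻¹ := by
  set g := h ∘ ⇑τ with hg
  have hmono := Tuple.monotone_sort g
  have h1 : g ∘ ⇑(Tuple.sort g) = h ∘ ⇑((Tuple.sort g).trans τ) := by
    rw [Equiv.coe_trans, hg]; rfl
  have h2 : Monotone (h ∘ ⇑((Tuple.sort g).trans τ)) := h1 ▸ hmono
  have h3 : h ∘ ⇑((Tuple.sort g).trans τ) = h ∘ ⇑(Equiv.refl (Fin k)) :=
    Tuple.unique_monotone h2 (by simpa using hh.monotone)
  have h4 : (Tuple.sort g).trans τ = Equiv.refl (Fin k) :=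
    Equiv.ext fun x => hh.injective (congrFun h3 x)
  calc Tuple.sort g = ((Tuple.sort g).trans τ).trans τ⁻¹ := by
        ext x; simp
    _ = τ⁻¹ := by rw [h4]; ext x; simp

lemma sum_inj_eq_sort {k n : ℕ} (F : (Fin k → Fin n) → ℝ) :
    ∑ g ∈ Finset.univ.filter (fun g : Fin k → Fin n => Function.Injective g), F g
    = ∑ g ∈ Finset.univ.filter (fun g : Fin k → Fin n => StrictMono g),
        ∑ σ : Equiv.Perm (Fin k), F (g ∘ ⇑σ) := by
  have step : ∀ g ∈ Finset.univ.filter (fun g : Fin k → Fin n => StrictMono g),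
      ∑ σ : Equiv.Perm (Fin k), F (g ∘ ⇑σ) = ∑ σ : Equiv.Perm (Fin k), F (g ∘ ⇑σ⁻¹) := by
    intro g _
    exact Fintype.sum_equiv (Equiv.inv (Equiv.Perm (Fin k))) _ _ (fun σ => rfl)
  rw [Finset.sum_congr rfl step, ← Finset.sum_product']
  refine Finset.sum_nbij' (fun g => (g ∘ ⇑(Tuple.sort g), Tuple.sort g))
    (fun p => p.1 ∘ ⇑(p.2)⁻¹) ?_ ?_ ?_ ?_ ?_
  · intro g hg
    simp only [Finset.mem_filter, Finset.mem_univ, true_and] at hg ⊢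
    rw [Finset.mem_product]
    constructor
    · simp only [Finset.mem_filter, Finset.mem_univ, true_and]
      exact (Tuple.monotone_sort g).strictMono_of_injective
        (hg.comp (Equiv.injective _))
    · exact Finset.mem_univ _
  · intro p hp
    simp only [Finset.mem_filter, Finset.mem_univ, true_and, Finset.mem_product] at hp ⊢
    exact hp.1.injective.comp (Equiv.injective _)
  · intro g hg
    ext x
    simp
  · intro p hp
    rw [Finset.mem_product] at hp
    simp only [Finset.mem_filter, Finset.mem_univ, true_and] at hp
    have hs : Tuple.sort (p.1 ∘ ⇑(p.2)⁻¹) = (p.2)⁻¹⁻¹ := sort_comp hp.1 (p.2)⁻¹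
    rw [hs]
    simp only [inv_inv]
    refine Prod.ext ?_ rfl
    ext x
    simp
  · intro g hg
    have : (g ∘ ⇑(Tuple.sort g)) ∘ ⇑(Tuple.sort g)⁻¹ = g := by ext x; simp
    rw [this]

lemma perm_sum_eq_inj {k : ℕ} (F : (Fin k → Fin k) → ℝ) :
    ∑ σ : Equiv.Perm (Fin k), F ⇑σ
    = ∑ e ∈ Finset.univ.filter (fun e : Fin k → Fin k => Function.Injective e), F e := by
  refine Finset.sum_nbij' (fun σ : Equiv.Perm (Fin k) => ⇑σ)
    (fun e => if h : Function.Injective e then Equiv.ofBijective e (Finite.injective_iff_bijective.mp h) else 1)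
    ?_ ?_ ?_ ?_ ?_
  · intro σ _
    simp [Equiv.injective]
  · intro e _
    exact Finset.mem_univ _
  · intro σ _
    rw [dif_pos (Equiv.injective σ)]
    ext x
    rfl
  · intro e he
    simp only [Finset.mem_filter, Finset.mem_univ, true_and] at he
    rw [dif_pos he]
    rfl
  · intro σ _
    rfl

lemma sum_fun_prod4 {X : Type*} [DecidableEq X] [Fintype X]
    (pt : X × X × X × X → Prop) [DecidablePred pt] (F : X × X × X × X → ℝ) :
    ∑ g ∈ Finset.univ.filter (fun g : Fin 4 → X => pt (g 0, g 1, g 2, g 3)),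
      F (g 0, g 1, g 2, g 3)
    = ∑ t ∈ Finset.univ.filter pt, F t := by
  refine Finset.sum_nbij' (fun g : Fin 4 → X => (g 0, g 1, g 2, g 3))
    (fun t => ![t.1, t.2.1, t.2.2.1, t.2.2.2]) ?_ ?_ ?_ ?_ ?_
  · intro g hg
    simpa using (Finset.mem_filter.mp hg).2
  · intro t ht
    simp only [Finset.mem_filter, Finset.mem_univ, true_and] at ht ⊢
    simpa using ht
  · intro g _
    funext x
    fin_cases x <;> simp
  · intro t _
    simp
  · intro g _
    rfl

lemma sum_fun_prod3 {X : Type*} [DecidableEq X] [Fintype X]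
    (pt : X × X × X → Prop) [DecidablePred pt] (F : X × X × X → ℝ) :
    ∑ g ∈ Finset.univ.filter (fun g : Fin 3 → X => pt (g 0, g 1, g 2)),
      F (g 0, g 1, g 2)
    = ∑ t ∈ Finset.univ.filter pt, F t := by
  refine Finset.sum_nbij' (fun g : Fin 3 → X => (g 0, g 1, g 2))
    (fun t => ![t.1, t.2.1, t.2.2]) ?_ ?_ ?_ ?_ ?_
  · intro g hg
    simpa using (Finset.mem_filter.mp hg).2
  · intro t ht
    simp only [Finset.mem_filter, Finset.mem_univ, true_and] at ht ⊢
    simpa using ht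
  · intro g _
    funext x
    fin_cases x <;> simp
  · intro t _
    simp
  · intro g _
    rfl

lemma sum_fun_prod2 {X : Type*} [DecidableEq X] [Fintype X]
    (pt : X × X → Prop) [DecidablePred pt] (F : X × X → ℝ) :
    ∑ g ∈ Finset.univ.filter (fun g : Fin 2 → X => pt (g 0, g 1)), F (g 0, g 1)
    = ∑ t ∈ Finset.univ.filter pt, F t := by
  refine Finset.sum_nbij' (fun g : Fin 2 → X => (g 0, g 1))
    (fun t => ![t.1, t.2]) ?_ ?_ ?_ ?_ ?_
  · intro g hg
    simpa using (Finset.mem_filter.mp hg).2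
  · intro t ht
    simp only [Finset.mem_filter, Finset.mem_univ, true_and] at ht ⊢
    simpa using ht
  · intro g _
    funext x
    fin_cases x <;> simp
  · intro t _
    simp
  · intro g _
    rfl

lemma inj4_iff {X : Type*} (g : Fin 4 → X) :
    Function.Injective g ↔
      (g 0 ≠ g 1 ∧ g 0 ≠ g 2 ∧ g 0 ≠ g 3 ∧ g 1 ≠ g 2 ∧ g 1 ≠ g 3 ∧ g 2 ≠ g 3) := by
  constructor
  · intro h
    refine ⟨fun e => ?_, fun e => ?_, fun e => ?_, fun e => ?_, fun e => ?_, fun e => ?_⟩ <;>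
      exact absurd (h e) (by decide)
  · rintro ⟨h1, h2, h3, h4, h5, h6⟩ x y hxy
    fin_cases x <;> fin_cases y <;> simp_all <;> tauto

lemma inj3_iff {X : Type*} (g : Fin 3 → X) :
    Function.Injective g ↔ (g 0 ≠ g 1 ∧ g 0 ≠ g 2 ∧ g 1 ≠ g 2) := by
  constructor
  · intro h
    refine ⟨fun e => ?_, fun e => ?_, fun e => ?_⟩ <;> exact absurd (h e) (by decide)
  · rintro ⟨h1, h2, h3⟩ x y hxy
    fin_cases x <;> fin_cases y <;> simp_all <;> tauto

lemma inj2_iff {X : Type*} (g : Fin 2 → X) :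
    Function.Injective g ↔ g 0 ≠ g 1 := by
  constructor
  · intro h e
    exact absurd (h e) (by decide)
  · intro h1 x y hxy
    fin_cases x <;> fin_cases y <;> simp_all <;> tauto

lemma mono4_iff {X : Type*} [LinearOrder X] (g : Fin 4 → X) :
    StrictMono g ↔ (g 0 < g 1 ∧ g 1 < g 2 ∧ g 2 < g 3) := by
  constructor
  · intro h
    exact ⟨h (by decide), h (by decide), h (by decide)⟩
  · rintro ⟨h1, h2, h3⟩
    have h4 : g 0 < g 2 := h1.trans h2
    have h5 : g 1 < g 3 := h2.trans h3
    have h6 : g 0 < g 3 := h4.trans h3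
    intro x y hxy
    fin_cases x <;> fin_cases y <;> simp_all <;> exact absurd hxy (by decide)

lemma mono3_iff {X : Type*} [LinearOrder X] (g : Fin 3 → X) :
    StrictMono g ↔ (g 0 < g 1 ∧ g 1 < g 2) := by
  constructor
  · intro h
    exact ⟨h (by decide), h (by decide)⟩
  · rintro ⟨h1, h2⟩
    have h4 : g 0 < g 2 := h1.trans h2
    intro x y hxy
    fin_cases x <;> fin_cases y <;> simp_all <;> exact absurd hxy (by decide)

lemma mono2_iff {X : Type*} [LinearOrder X] (g : Fin 2 → X) :
    StrictMono g ↔ g 0 < g 1 := by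
  constructor
  · intro h
    exact h (by decide)
  · intro h1 x y hxy
    fin_cases x <;> fin_cases y <;> simp_all <;> exact absurd hxy (by decide)

lemma pair_eval {n : ℕ} (a : Fin n → Fin n → ℝ) (hsym : ∀ x y, a x y = a y x)
    (g : Fin 2 → Fin n) :
    ∑ s ∈ Finset.univ.filter (fun s : Fin 2 × Fin 2 => s.1 ≠ s.2),
      a (g s.1) (g s.2) ^ 4
    = 2 * a (g 0) (g 1) ^ 4 := by
  rw [Finset.sum_filter, Fintype.sum_prod_type]
  simp only [Fin.sum_univ_two]
  norm_num
  rw [hsym (g 1) (g 0)]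
  ring

lemma triple_eval {n : ℕ} (a : Fin n → Fin n → ℝ) (hsym : ∀ x y, a x y = a y x)
    (g : Fin 3 → Fin n) :
    ∑ s ∈ Finset.univ.filter
        (fun s : Fin 3 × Fin 3 × Fin 3 => s.1 ≠ s.2.1 ∧ s.1 ≠ s.2.2 ∧ s.2.1 ≠ s.2.2),
      a (g s.1) (g s.2.1) ^ 2 * a (g s.1) (g s.2.2) ^ 2
    = 2 * (a (g 0) (g 1) ^ 2 * a (g 0) (g 2) ^ 2 +
           a (g 0) (g 1) ^ 2 * a (g 1) (g 2) ^ 2 +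
           a (g 0) (g 2) ^ 2 * a (g 1) (g 2) ^ 2) := by
  rw [Finset.sum_filter, Fintype.sum_prod_type]
  simp only [Fintype.sum_prod_type, Fin.sum_univ_three]
  norm_num [Fin.ext_iff]
  rw [hsym (g 1) (g 0), hsym (g 2) (g 0), hsym (g 2) (g 1)]
  ring

lemma quad_eval {n : ℕ} (a : Fin n → Fin n → ℝ) (hsym : ∀ x y, a x y = a y x)
    (g : Fin 4 → Fin n) :
    ∑ s ∈ Finset.univ.filter
        (fun s : Fin 4 × Fin 4 × Fin 4 × Fin 4 =>
          s.1 ≠ s.2.1 ∧ s.1 ≠ s.2.2.1 ∧ s.1 ≠ s.2.2.2 ∧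
          s.2.1 ≠ s.2.2.1 ∧ s.2.1 ≠ s.2.2.2 ∧ s.2.2.1 ≠ s.2.2.2),
      a (g s.1) (g s.2.1) * a (g s.2.1) (g s.2.2.1) *
        a (g s.2.2.1) (g s.2.2.2) * a (g s.2.2.2) (g s.1)
    = 8 * (a (g 0) (g 2) * a (g 0) (g 3) * a (g 1) (g 2) * a (g 1) (g 3) +
           a (g 0) (g 1) * a (g 0) (g 3) * a (g 1) (g 2) * a (g 2) (g 3) +
           a (g 0) (g 1) * a (g 0) (g 2) * a (g 1) (g 3) * a (g 2) (g 3)) := by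
  rw [Finset.sum_filter, Fintype.sum_prod_type]
  simp only [Fintype.sum_prod_type, Fin.sum_univ_four]
  simp (config := { decide := true })
  rw [hsym (g 1) (g 0), hsym (g 2) (g 0), hsym (g 3) (g 0),
      hsym (g 2) (g 1), hsym (g 3) (g 1), hsym (g 3) (g 2)]
  ring

lemma sum_distinct4 {n : ℕ} (F : Fin n × Fin n × Fin n × Fin n → ℝ) :
    ∑ t ∈ Finset.univ.filter
        (fun t : Fin n × Fin n × Fin n × Fin n =>
          t.1 ≠ t.2.1 ∧ t.1 ≠ t.2.2.1 ∧ t.1 ≠ t.2.2.2 ∧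
          t.2.1 ≠ t.2.2.1 ∧ t.2.1 ≠ t.2.2.2 ∧ t.2.2.1 ≠ t.2.2.2), F t
    = ∑ t ∈ Finset.univ.filter
        (fun t : Fin n × Fin n × Fin n × Fin n =>
          t.1 < t.2.1 ∧ t.2.1 < t.2.2.1 ∧ t.2.2.1 < t.2.2.2),
        ∑ s ∈ Finset.univ.filter
          (fun s : Fin 4 × Fin 4 × Fin 4 × Fin 4 =>
            s.1 ≠ s.2.1 ∧ s.1 ≠ s.2.2.1 ∧ s.1 ≠ s.2.2.2 ∧
            s.2.1 ≠ s.2.2.1 ∧ s.2.1 ≠ s.2.2.2 ∧ s.2.2.1 ≠ s.2.2.2),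
          F (![t.1, t.2.1, t.2.2.1, t.2.2.2] s.1,
             ![t.1, t.2.1, t.2.2.1, t.2.2.2] s.2.1,
             ![t.1, t.2.1, t.2.2.1, t.2.2.2] s.2.2.1,
             ![t.1, t.2.1, t.2.2.1, t.2.2.2] s.2.2.2) := by
  refine Eq.trans (Eq.symm (sum_fun_prod4 (fun t : Fin n × Fin n × Fin n × Fin n =>
          t.1 ≠ t.2.1 ∧ t.1 ≠ t.2.2.1 ∧ t.1 ≠ t.2.2.2 ∧
          t.2.1 ≠ t.2.2.1 ∧ t.2.1 ≠ t.2.2.2 ∧ t.2.2.1 ≠ t.2.2.2) F)) ?_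
  have hfilt1 : Finset.univ.filter (fun g : Fin 4 → Fin n =>
      g 0 ≠ g 1 ∧ g 0 ≠ g 2 ∧ g 0 ≠ g 3 ∧ g 1 ≠ g 2 ∧ g 1 ≠ g 3 ∧ g 2 ≠ g 3)
      = Finset.univ.filter (fun g : Fin 4 → Fin n => Function.Injective g) :=
    Finset.filter_congr (fun g _ => (inj4_iff g).symm)
  refine Eq.trans (Finset.sum_congr hfilt1 (fun _ _ => rfl)) ?_
  refine Eq.trans (sum_inj_eq_sort (fun g => F (g 0, g 1, g 2, g 3))) ?_
  have step2 : ∀ g ∈ Finset.univ.filter (fun g : Fin 4 → Fin n => StrictMono g),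
      (∑ σ : Equiv.Perm (Fin 4),
          F ((g ∘ ⇑σ) 0, (g ∘ ⇑σ) 1, (g ∘ ⇑σ) 2, (g ∘ ⇑σ) 3))
      = ∑ s ∈ Finset.univ.filter
          (fun s : Fin 4 × Fin 4 × Fin 4 × Fin 4 =>
            s.1 ≠ s.2.1 ∧ s.1 ≠ s.2.2.1 ∧ s.1 ≠ s.2.2.2 ∧
            s.2.1 ≠ s.2.2.1 ∧ s.2.1 ≠ s.2.2.2 ∧ s.2.2.1 ≠ s.2.2.2),
          F (g s.1, g s.2.1, g s.2.2.1, g s.2.2.2) := by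
    intro g _
    refine Eq.trans (perm_sum_eq_inj
      (fun e : Fin 4 → Fin 4 => F (g (e 0), g (e 1), g (e 2), g (e 3)))) ?_
    have hfilt2 : Finset.univ.filter (fun e : Fin 4 → Fin 4 => Function.Injective e)
        = Finset.univ.filter (fun e : Fin 4 → Fin 4 =>
            e 0 ≠ e 1 ∧ e 0 ≠ e 2 ∧ e 0 ≠ e 3 ∧ e 1 ≠ e 2 ∧ e 1 ≠ e 3 ∧ e 2 ≠ e 3) :=
      Finset.filter_congr (fun e _ => inj4_iff e)
    refine Eq.trans (Finset.sum_congr hfilt2 (fun _ _ => rfl)) ?_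
    exact sum_fun_prod4
      (fun s : Fin 4 × Fin 4 × Fin 4 × Fin 4 =>
        s.1 ≠ s.2.1 ∧ s.1 ≠ s.2.2.1 ∧ s.1 ≠ s.2.2.2 ∧
        s.2.1 ≠ s.2.2.1 ∧ s.2.1 ≠ s.2.2.2 ∧ s.2.2.1 ≠ s.2.2.2)
      (fun s => F (g s.1, g s.2.1, g s.2.2.1, g s.2.2.2))
  refine Eq.trans (Finset.sum_congr rfl step2) ?_
  have hfilt3 : Finset.univ.filter (fun g : Fin 4 → Fin n => StrictMono g)
      = Finset.univ.filter (fun g : Fin 4 → Fin n => g 0 < g 1 ∧ g 1 < g 2 ∧ g 2 < g 3) :=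
    Finset.filter_congr (fun g _ => mono4_iff g)
  refine Eq.trans (Finset.sum_congr hfilt3 (fun _ _ => rfl)) ?_
  refine Eq.trans ?_ (sum_fun_prod4
    (fun t : Fin n × Fin n × Fin n × Fin n =>
      t.1 < t.2.1 ∧ t.2.1 < t.2.2.1 ∧ t.2.2.1 < t.2.2.2)
    (fun t => ∑ s ∈ Finset.univ.filter
        (fun s : Fin 4 × Fin 4 × Fin 4 × Fin 4 =>
          s.1 ≠ s.2.1 ∧ s.1 ≠ s.2.2.1 ∧ s.1 ≠ s.2.2.2 ∧
          s.2.1 ≠ s.2.2.1 ∧ s.2.1 ≠ s.2.2.2 ∧ s.2.2.1 ≠ s.2.2.2),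
        F (![t.1, t.2.1, t.2.2.1, t.2.2.2] s.1,
           ![t.1, t.2.1, t.2.2.1, t.2.2.2] s.2.1,
           ![t.1, t.2.1, t.2.2.1, t.2.2.2] s.2.2.1,
           ![t.1, t.2.1, t.2.2.1, t.2.2.2] s.2.2.2)))
  refine Finset.sum_congr rfl ?_
  intro g _
  have hg : (![g 0, g 1, g 2, g 3] : Fin 4 → Fin n) = g := by
    funext x; fin_cases x <;> simp
  refine Finset.sum_congr rfl ?_
  intro s _
  rw [hg]


lemma sum_distinct3 {n : ℕ} (F : Fin n × Fin n × Fin n → ℝ) :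
    ∑ t ∈ Finset.univ.filter
        (fun t : Fin n × Fin n × Fin n =>
          t.1 ≠ t.2.1 ∧ t.1 ≠ t.2.2 ∧ t.2.1 ≠ t.2.2), F t
    = ∑ t ∈ Finset.univ.filter
        (fun t : Fin n × Fin n × Fin n => t.1 < t.2.1 ∧ t.2.1 < t.2.2),
        ∑ s ∈ Finset.univ.filter
          (fun s : Fin 3 × Fin 3 × Fin 3 =>
            s.1 ≠ s.2.1 ∧ s.1 ≠ s.2.2 ∧ s.2.1 ≠ s.2.2),
          F (![t.1, t.2.1, t.2.2] s.1,
             ![t.1, t.2.1, t.2.2] s.2.1,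
             ![t.1, t.2.1, t.2.2] s.2.2) := by
  refine Eq.trans (Eq.symm (sum_fun_prod3 (fun t : Fin n × Fin n × Fin n =>
          t.1 ≠ t.2.1 ∧ t.1 ≠ t.2.2 ∧ t.2.1 ≠ t.2.2) F)) ?_
  have hfilt1 : Finset.univ.filter (fun g : Fin 3 → Fin n =>
      g 0 ≠ g 1 ∧ g 0 ≠ g 2 ∧ g 1 ≠ g 2)
      = Finset.univ.filter (fun g : Fin 3 → Fin n => Function.Injective g) :=
    Finset.filter_congr (fun g _ => (inj3_iff g).symm)
  refine Eq.trans (Finset.sum_congr hfilt1 (fun _ _ => rfl)) ?_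
  refine Eq.trans (sum_inj_eq_sort (fun g => F (g 0, g 1, g 2))) ?_
  have step2 : ∀ g ∈ Finset.univ.filter (fun g : Fin 3 → Fin n => StrictMono g),
      (∑ σ : Equiv.Perm (Fin 3), F ((g ∘ ⇑σ) 0, (g ∘ ⇑σ) 1, (g ∘ ⇑σ) 2))
      = ∑ s ∈ Finset.univ.filter
          (fun s : Fin 3 × Fin 3 × Fin 3 =>
            s.1 ≠ s.2.1 ∧ s.1 ≠ s.2.2 ∧ s.2.1 ≠ s.2.2),
          F (g s.1, g s.2.1, g s.2.2) := by
    intro g _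
    refine Eq.trans (perm_sum_eq_inj
      (fun e : Fin 3 → Fin 3 => F (g (e 0), g (e 1), g (e 2)))) ?_
    have hfilt2 : Finset.univ.filter (fun e : Fin 3 → Fin 3 => Function.Injective e)
        = Finset.univ.filter (fun e : Fin 3 → Fin 3 =>
            e 0 ≠ e 1 ∧ e 0 ≠ e 2 ∧ e 1 ≠ e 2) :=
      Finset.filter_congr (fun e _ => inj3_iff e)
    refine Eq.trans (Finset.sum_congr hfilt2 (fun _ _ => rfl)) ?_
    exact sum_fun_prod3
      (fun s : Fin 3 × Fin 3 × Fin 3 => s.1 ≠ s.2.1 ∧ s.1 ≠ s.2.2 ∧ s.2.1 ≠ s.2.2)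
      (fun s => F (g s.1, g s.2.1, g s.2.2))
  refine Eq.trans (Finset.sum_congr rfl step2) ?_
  have hfilt3 : Finset.univ.filter (fun g : Fin 3 → Fin n => StrictMono g)
      = Finset.univ.filter (fun g : Fin 3 → Fin n => g 0 < g 1 ∧ g 1 < g 2) :=
    Finset.filter_congr (fun g _ => mono3_iff g)
  refine Eq.trans (Finset.sum_congr hfilt3 (fun _ _ => rfl)) ?_
  refine Eq.trans ?_ (sum_fun_prod3
    (fun t : Fin n × Fin n × Fin n => t.1 < t.2.1 ∧ t.2.1 < t.2.2)
    (fun t => ∑ s ∈ Finset.univ.filter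
        (fun s : Fin 3 × Fin 3 × Fin 3 =>
          s.1 ≠ s.2.1 ∧ s.1 ≠ s.2.2 ∧ s.2.1 ≠ s.2.2),
        F (![t.1, t.2.1, t.2.2] s.1,
           ![t.1, t.2.1, t.2.2] s.2.1,
           ![t.1, t.2.1, t.2.2] s.2.2)))
  refine Finset.sum_congr rfl ?_
  intro g _
  have hg : (![g 0, g 1, g 2] : Fin 3 → Fin n) = g := by
    funext x; fin_cases x <;> simp
  refine Finset.sum_congr rfl ?_
  intro s _
  rw [hg]

lemma sum_distinct2 {n : ℕ} (F : Fin n × Fin n → ℝ) :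
    ∑ t ∈ Finset.univ.filter (fun t : Fin n × Fin n => t.1 ≠ t.2), F t
    = ∑ t ∈ Finset.univ.filter (fun t : Fin n × Fin n => t.1 < t.2),
        ∑ s ∈ Finset.univ.filter (fun s : Fin 2 × Fin 2 => s.1 ≠ s.2),
          F (![t.1, t.2] s.1, ![t.1, t.2] s.2) := by
  refine Eq.trans (Eq.symm (sum_fun_prod2
    (fun t : Fin n × Fin n => t.1 ≠ t.2) F)) ?_
  have hfilt1 : Finset.univ.filter (fun g : Fin 2 → Fin n => g 0 ≠ g 1)
      = Finset.univ.filter (fun g : Fin 2 → Fin n => Function.Injective g) :=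
    Finset.filter_congr (fun g _ => (inj2_iff g).symm)
  refine Eq.trans (Finset.sum_congr hfilt1 (fun _ _ => rfl)) ?_
  refine Eq.trans (sum_inj_eq_sort (fun g => F (g 0, g 1))) ?_
  have step2 : ∀ g ∈ Finset.univ.filter (fun g : Fin 2 → Fin n => StrictMono g),
      (∑ σ : Equiv.Perm (Fin 2), F ((g ∘ ⇑σ) 0, (g ∘ ⇑σ) 1))
      = ∑ s ∈ Finset.univ.filter (fun s : Fin 2 × Fin 2 => s.1 ≠ s.2),
          F (g s.1, g s.2) := by
    intro g _
    refine Eq.trans (perm_sum_eq_inj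
      (fun e : Fin 2 → Fin 2 => F (g (e 0), g (e 1)))) ?_
    have hfilt2 : Finset.univ.filter (fun e : Fin 2 → Fin 2 => Function.Injective e)
        = Finset.univ.filter (fun e : Fin 2 → Fin 2 => e 0 ≠ e 1) :=
      Finset.filter_congr (fun e _ => inj2_iff e)
    refine Eq.trans (Finset.sum_congr hfilt2 (fun _ _ => rfl)) ?_
    exact sum_fun_prod2 (fun s : Fin 2 × Fin 2 => s.1 ≠ s.2)
      (fun s => F (g s.1, g s.2))
  refine Eq.trans (Finset.sum_congr rfl step2) ?_
  have hfilt3 : Finset.univ.filter (fun g : Fin 2 → Fin n => StrictMono g)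
      = Finset.univ.filter (fun g : Fin 2 → Fin n => g 0 < g 1) :=
    Finset.filter_congr (fun g _ => mono2_iff g)
  refine Eq.trans (Finset.sum_congr hfilt3 (fun _ _ => rfl)) ?_
  refine Eq.trans ?_ (sum_fun_prod2
    (fun t : Fin n × Fin n => t.1 < t.2)
    (fun t => ∑ s ∈ Finset.univ.filter (fun s : Fin 2 × Fin 2 => s.1 ≠ s.2),
        F (![t.1, t.2] s.1, ![t.1, t.2] s.2)))
  refine Finset.sum_congr rfl ?_
  intro g _
  have hg : (![g 0, g 1] : Fin 2 → Fin n) = g := by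
    funext x; fin_cases x <;> simp
  refine Finset.sum_congr rfl ?_
  intro s _
  rw [hg]

lemma class11 {n : ℕ} (a : Fin n → Fin n → ℝ) (hdiag : ∀ x, a x x = 0)
    (hsym : ∀ x y, a x y = a y x) :
    ∑ t ∈ (Finset.univ.filter
        (fun t : Fin n × Fin n × Fin n × Fin n => t.1 = t.2.2.1)).filter
        (fun t => t.2.1 = t.2.2.2),
      a t.1 t.2.1 * a t.2.1 t.2.2.1 * a t.2.2.1 t.2.2.2 * a t.2.2.2 t.1
    = 2 * ∑ s ∈ Finset.univ.filter (fun s : Fin n × Fin n => s.1 < s.2),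
        a s.1 s.2 ^ 4 := by
  have h1 : ∑ t ∈ (Finset.univ.filter
        (fun t : Fin n × Fin n × Fin n × Fin n => t.1 = t.2.2.1)).filter
        (fun t => t.2.1 = t.2.2.2),
      a t.1 t.2.1 * a t.2.1 t.2.2.1 * a t.2.2.1 t.2.2.2 * a t.2.2.2 t.1
      = ∑ s ∈ (Finset.univ : Finset (Fin n × Fin n)), a s.1 s.2 ^ 4 := by
    refine Finset.sum_nbij' (fun t : Fin n × Fin n × Fin n × Fin n => (t.1, t.2.1))
      (fun s : Fin n × Fin n => (s.1, s.2, s.1, s.2)) ?_ ?_ ?_ ?_ ?_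
    · intro t _; exact Finset.mem_univ _
    · intro s _; simp
    · intro t ht
      simp only [Finset.mem_filter, Finset.mem_univ, true_and] at ht
      obtain ⟨i, j, k, l⟩ := t
      obtain ⟨h1, h2⟩ := ht
      simp only at h1 h2
      subst h1
      subst h2
      rfl
    · intro s _; rfl
    · intro t ht
      simp only [Finset.mem_filter, Finset.mem_univ, true_and] at ht
      obtain ⟨i, j, k, l⟩ := t
      obtain ⟨h1, h2⟩ := ht
      simp only at h1 h2 ⊢
      subst h1
      subst h2
      rw [hsym j i]
      ring
  rw [h1]
  rw [← Finset.sum_filter_of_ne (p := fun s : Fin n × Fin n => s.1 ≠ s.2)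
    (fun x _ hx => by
      intro heq
      apply hx
      rw [heq, hdiag]
      norm_num)]
  rw [sum_distinct2 (fun s : Fin n × Fin n => a s.1 s.2 ^ 4)]
  rw [Finset.mul_sum]
  refine Finset.sum_congr rfl ?_
  intro t _
  rw [pair_eval a hsym ![t.1, t.2]]
  simp

lemma class12 {n : ℕ} (a : Fin n → Fin n → ℝ) (hdiag : ∀ x, a x x = 0)
    (hsym : ∀ x y, a x y = a y x) :
    ∑ t ∈ (Finset.univ.filter
        (fun t : Fin n × Fin n × Fin n × Fin n => t.1 = t.2.2.1)).filter
        (fun t => ¬ t.2.1 = t.2.2.2),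
      a t.1 t.2.1 * a t.2.1 t.2.2.1 * a t.2.2.1 t.2.2.2 * a t.2.2.2 t.1
    = 2 * ∑ t ∈ Finset.univ.filter
        (fun t : Fin n × Fin n × Fin n => t.1 < t.2.1 ∧ t.2.1 < t.2.2),
        (a t.1 t.2.1 ^ 2 * a t.1 t.2.2 ^ 2 + a t.1 t.2.1 ^ 2 * a t.2.1 t.2.2 ^ 2 +
         a t.1 t.2.2 ^ 2 * a t.2.1 t.2.2 ^ 2) := by
  have h1 : ∑ t ∈ (Finset.univ.filter
        (fun t : Fin n × Fin n × Fin n × Fin n => t.1 = t.2.2.1)).filter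
        (fun t => ¬ t.2.1 = t.2.2.2),
      a t.1 t.2.1 * a t.2.1 t.2.2.1 * a t.2.2.1 t.2.2.2 * a t.2.2.2 t.1
      = ∑ s ∈ Finset.univ.filter
          (fun s : Fin n × Fin n × Fin n => ¬ s.2.1 = s.2.2),
          a s.1 s.2.1 ^ 2 * a s.1 s.2.2 ^ 2 := by
    refine Finset.sum_nbij' (fun t : Fin n × Fin n × Fin n × Fin n => (t.1, t.2.1, t.2.2.2))
      (fun s : Fin n × Fin n × Fin n => (s.1, s.2.1, s.1, s.2.2)) ?_ ?_ ?_ ?_ ?_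
    · intro t ht
      simp only [Finset.mem_filter, Finset.mem_univ, true_and] at ht ⊢
      exact ht.2
    · intro s hs
      simp only [Finset.mem_filter, Finset.mem_univ, true_and] at hs ⊢
      try exact hs
      try exact ⟨rfl, hs⟩
    · intro t ht
      simp only [Finset.mem_filter, Finset.mem_univ, true_and] at ht
      obtain ⟨i, j, k, l⟩ := t
      obtain ⟨h1, h2⟩ := ht
      simp only at h1 h2 ⊢
      subst h1
      rfl
    · intro s _; rfl
    · intro t ht
      simp only [Finset.mem_filter, Finset.mem_univ, true_and] at ht
      obtain ⟨i, j, k, l⟩ := t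
      obtain ⟨h1, h2⟩ := ht
      simp only at h1 h2 ⊢
      subst h1
      rw [hsym j i, hsym l i]
      ring
  rw [h1]
  rw [← Finset.sum_filter_of_ne (p := fun s : Fin n × Fin n × Fin n =>
      s.1 ≠ s.2.1 ∧ s.1 ≠ s.2.2)
    (fun x _ hx => by
      constructor
      · intro heq
        apply hx
        rw [← heq, hdiag]
        norm_num
      · intro heq
        apply hx
        rw [← heq, hdiag]
        norm_num)]
  rw [Finset.filter_filter]
  rw [Finset.filter_congr (fun s _ => by tauto :
    ∀ s ∈ (Finset.univ : Finset (Fin n × Fin n × Fin n)),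
      ((¬ s.2.1 = s.2.2) ∧ s.1 ≠ s.2.1 ∧ s.1 ≠ s.2.2 ↔
        s.1 ≠ s.2.1 ∧ s.1 ≠ s.2.2 ∧ s.2.1 ≠ s.2.2))]
  rw [sum_distinct3 (fun s : Fin n × Fin n × Fin n => a s.1 s.2.1 ^ 2 * a s.1 s.2.2 ^ 2)]
  rw [Finset.mul_sum]
  refine Finset.sum_congr rfl ?_
  intro t _
  rw [triple_eval a hsym ![t.1, t.2.1, t.2.2]]
  simp

lemma class21 {n : ℕ} (a : Fin n → Fin n → ℝ) (hdiag : ∀ x, a x x = 0)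
    (hsym : ∀ x y, a x y = a y x) :
    ∑ t ∈ (Finset.univ.filter
        (fun t : Fin n × Fin n × Fin n × Fin n => ¬ t.1 = t.2.2.1)).filter
        (fun t => t.2.1 = t.2.2.2),
      a t.1 t.2.1 * a t.2.1 t.2.2.1 * a t.2.2.1 t.2.2.2 * a t.2.2.2 t.1
    = 2 * ∑ t ∈ Finset.univ.filter
        (fun t : Fin n × Fin n × Fin n => t.1 < t.2.1 ∧ t.2.1 < t.2.2),
        (a t.1 t.2.1 ^ 2 * a t.1 t.2.2 ^ 2 + a t.1 t.2.1 ^ 2 * a t.2.1 t.2.2 ^ 2 +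
         a t.1 t.2.2 ^ 2 * a t.2.1 t.2.2 ^ 2) := by
  have h1 : ∑ t ∈ (Finset.univ.filter
        (fun t : Fin n × Fin n × Fin n × Fin n => ¬ t.1 = t.2.2.1)).filter
        (fun t => t.2.1 = t.2.2.2),
      a t.1 t.2.1 * a t.2.1 t.2.2.1 * a t.2.2.1 t.2.2.2 * a t.2.2.2 t.1
      = ∑ s ∈ Finset.univ.filter
          (fun s : Fin n × Fin n × Fin n => ¬ s.2.1 = s.2.2),
          a s.1 s.2.1 ^ 2 * a s.1 s.2.2 ^ 2 := by
    refine Finset.sum_nbij' (fun t : Fin n × Fin n × Fin n × Fin n => (t.2.1, t.1, t.2.2.1))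
      (fun s : Fin n × Fin n × Fin n => (s.2.1, s.1, s.2.2, s.1)) ?_ ?_ ?_ ?_ ?_
    · intro t ht
      simp only [Finset.mem_filter, Finset.mem_univ, true_and] at ht ⊢
      exact ht.1
    · intro s hs
      simp only [Finset.mem_filter, Finset.mem_univ, true_and] at hs ⊢
      exact ⟨hs, trivial⟩
    · intro t ht
      simp only [Finset.mem_filter, Finset.mem_univ, true_and] at ht
      obtain ⟨i, j, k, l⟩ := t
      obtain ⟨h1, h2⟩ := ht
      simp only at h1 h2 ⊢
      subst h2
      rfl
    · intro s _; rfl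
    · intro t ht
      simp only [Finset.mem_filter, Finset.mem_univ, true_and] at ht
      obtain ⟨i, j, k, l⟩ := t
      obtain ⟨h1, h2⟩ := ht
      simp only at h1 h2 ⊢
      subst h2
      rw [hsym i j, hsym k j]
      ring
  rw [h1]
  rw [← Finset.sum_filter_of_ne (p := fun s : Fin n × Fin n × Fin n =>
      s.1 ≠ s.2.1 ∧ s.1 ≠ s.2.2)
    (fun x _ hx => by
      constructor
      · intro heq
        apply hx
        rw [← heq, hdiag]
        norm_num
      · intro heq
        apply hx
        rw [← heq, hdiag]
        norm_num)]
  rw [Finset.filter_filter]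
  rw [Finset.filter_congr (fun s _ => by tauto :
    ∀ s ∈ (Finset.univ : Finset (Fin n × Fin n × Fin n)),
      ((¬ s.2.1 = s.2.2) ∧ s.1 ≠ s.2.1 ∧ s.1 ≠ s.2.2 ↔
        s.1 ≠ s.2.1 ∧ s.1 ≠ s.2.2 ∧ s.2.1 ≠ s.2.2))]
  rw [sum_distinct3 (fun s : Fin n × Fin n × Fin n => a s.1 s.2.1 ^ 2 * a s.1 s.2.2 ^ 2)]
  rw [Finset.mul_sum]
  refine Finset.sum_congr rfl ?_
  intro t _
  rw [triple_eval a hsym ![t.1, t.2.1, t.2.2]]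
  simp

lemma class22 {n : ℕ} (a : Fin n → Fin n → ℝ) (hdiag : ∀ x, a x x = 0)
    (hsym : ∀ x y, a x y = a y x) :
    ∑ t ∈ (Finset.univ.filter
        (fun t : Fin n × Fin n × Fin n × Fin n => ¬ t.1 = t.2.2.1)).filter
        (fun t => ¬ t.2.1 = t.2.2.2),
      a t.1 t.2.1 * a t.2.1 t.2.2.1 * a t.2.2.1 t.2.2.2 * a t.2.2.2 t.1
    = 8 * ∑ t ∈ Finset.univ.filter
        (fun t : Fin n × Fin n × Fin n × Fin n =>
          t.1 < t.2.1 ∧ t.2.1 < t.2.2.1 ∧ t.2.2.1 < t.2.2.2),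
        (a t.1 t.2.2.1 * a t.1 t.2.2.2 * a t.2.1 t.2.2.1 * a t.2.1 t.2.2.2 +
         a t.1 t.2.1 * a t.1 t.2.2.2 * a t.2.1 t.2.2.1 * a t.2.2.1 t.2.2.2 +
         a t.1 t.2.1 * a t.1 t.2.2.1 * a t.2.1 t.2.2.2 * a t.2.2.1 t.2.2.2) := by
  rw [Finset.filter_filter]
  rw [← Finset.sum_filter_of_ne (p := fun t : Fin n × Fin n × Fin n × Fin n =>
      t.1 ≠ t.2.1 ∧ t.1 ≠ t.2.2.2 ∧ t.2.1 ≠ t.2.2.1 ∧ t.2.2.1 ≠ t.2.2.2)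
    (fun x _ hx => by
      refine ⟨?_, ?_, ?_, ?_⟩ <;> intro heq <;> apply hx
      · rw [heq, hdiag]; ring
      · rw [← heq, hdiag]; ring
      · rw [heq, hdiag]; ring
      · rw [heq, hdiag]; ring)]
  rw [Finset.filter_filter]
  rw [Finset.filter_congr (fun t _ => by tauto :
    ∀ t ∈ (Finset.univ : Finset (Fin n × Fin n × Fin n × Fin n)),
      (((¬ t.1 = t.2.2.1) ∧ ¬ t.2.1 = t.2.2.2) ∧
        t.1 ≠ t.2.1 ∧ t.1 ≠ t.2.2.2 ∧ t.2.1 ≠ t.2.2.1 ∧ t.2.2.1 ≠ t.2.2.2 ↔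
       t.1 ≠ t.2.1 ∧ t.1 ≠ t.2.2.1 ∧ t.1 ≠ t.2.2.2 ∧
        t.2.1 ≠ t.2.2.1 ∧ t.2.1 ≠ t.2.2.2 ∧ t.2.2.1 ≠ t.2.2.2))]
  rw [sum_distinct4 (fun t : Fin n × Fin n × Fin n × Fin n =>
      a t.1 t.2.1 * a t.2.1 t.2.2.1 * a t.2.2.1 t.2.2.2 * a t.2.2.2 t.1)]
  rw [Finset.mul_sum]
  refine Finset.sum_congr rfl ?_
  intro t _
  rw [quad_eval a hsym ![t.1, t.2.1, t.2.2.1, t.2.2.2]]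
  simp

/-- expansion of `trace((P − diag(P))⁴)` into sums over ordered
index tuples. -/
theorem stmt_15 (n : ℕ) (P : Matrix (Fin n) (Fin n) ℝ) (hsymm : P.IsSymm) :
    ((P - Matrix.diagonal fun i => P i i) ^ 4).trace =
      2 * ∑ t ∈ Finset.univ.filter (fun t : Fin n × Fin n => t.1 < t.2),
            P t.1 t.2 ^ 4 +
      4 * ∑ t ∈ Finset.univ.filter
            (fun t : Fin n × Fin n × Fin n => t.1 < t.2.1 ∧ t.2.1 < t.2.2),
            (P t.1 t.2.1 ^ 2 * P t.1 t.2.2 ^ 2 +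
             P t.1 t.2.1 ^ 2 * P t.2.1 t.2.2 ^ 2 +
             P t.1 t.2.2 ^ 2 * P t.2.1 t.2.2 ^ 2) +
      8 * ∑ t ∈ Finset.univ.filter
            (fun t : Fin n × Fin n × Fin n × Fin n =>
              t.1 < t.2.1 ∧ t.2.1 < t.2.2.1 ∧ t.2.2.1 < t.2.2.2),
            (P t.1 t.2.2.1 * P t.1 t.2.2.2 * P t.2.1 t.2.2.1 * P t.2.1 t.2.2.2 +
             P t.1 t.2.1 * P t.1 t.2.2.2 * P t.2.1 t.2.2.1 * P t.2.2.1 t.2.2.2 +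
             P t.1 t.2.1 * P t.1 t.2.2.1 * P t.2.1 t.2.2.2 * P t.2.2.1 t.2.2.2) := by
  have hPsym : ∀ i j, P j i = P i j := fun i j => hsymm.apply i j
  set a : Fin n → Fin n → ℝ := fun i j => if i = j then 0 else P i j with ha
  have hdiag : ∀ x, a x x = 0 := fun x => by simp [ha]
  have hsym : ∀ x y, a x y = a y x := by
    intro x y
    by_cases h : x = y
    · rw [h]
    · simp only [ha]
      rw [if_neg h, if_neg (Ne.symm h)]
      exact (hPsym x y).symm
  have hne : ∀ x y : Fin n, x ≠ y → a x y = P x y := fun x y h => by simp [ha, h]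
  have hM : P - Matrix.diagonal (fun i => P i i) = Matrix.of a := by
    ext i j
    by_cases h : i = j
    · subst h
      simp [ha]
    · simp [ha, h, Matrix.diagonal_apply_ne _ h]
  rw [hM]
  have htrace : ((Matrix.of a) ^ 4).trace
      = ∑ i : Fin n, ∑ l : Fin n, ∑ k : Fin n, ∑ j : Fin n,
          a i j * a j k * a k l * a l i := by
    rw [pow_succ, pow_succ, pow_succ, pow_one]
    simp only [Matrix.trace, Matrix.diag, Matrix.mul_apply, Finset.sum_mul,
      Matrix.of_apply]
  rw [htrace]
  have hprod : (∑ i : Fin n, ∑ l : Fin n, ∑ k : Fin n, ∑ j : Fin n,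
        a i j * a j k * a k l * a l i)
      = ∑ t : Fin n × Fin n × Fin n × Fin n,
          a t.1 t.2.1 * a t.2.1 t.2.2.1 * a t.2.2.1 t.2.2.2 * a t.2.2.2 t.1 := by
    calc (∑ i : Fin n, ∑ l : Fin n, ∑ k : Fin n, ∑ j : Fin n,
          a i j * a j k * a k l * a l i)
        = ∑ t : Fin n × Fin n × Fin n × Fin n,
            a t.1 t.2.2.2 * a t.2.2.2 t.2.2.1 * a t.2.2.1 t.2.1 * a t.2.1 t.1 := by
          simp only [Fintype.sum_prod_type]
      _ = _ := Fintype.sum_equiv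
        ⟨fun t : Fin n × Fin n × Fin n × Fin n => (t.1, t.2.2.2, t.2.2.1, t.2.1),
         fun t => (t.1, t.2.2.2, t.2.2.1, t.2.1), fun t => rfl, fun t => rfl⟩
        _ _ (fun t => rfl)
  rw [hprod]
  rw [← Finset.sum_filter_add_sum_filter_not Finset.univ
      (fun t : Fin n × Fin n × Fin n × Fin n => t.1 = t.2.2.1)]
  rw [← Finset.sum_filter_add_sum_filter_not
      (Finset.univ.filter (fun t : Fin n × Fin n × Fin n × Fin n => t.1 = t.2.2.1))
      (fun t => t.2.1 = t.2.2.2)]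
  rw [← Finset.sum_filter_add_sum_filter_not
      (Finset.univ.filter (fun t : Fin n × Fin n × Fin n × Fin n => ¬ t.1 = t.2.2.1))
      (fun t => t.2.1 = t.2.2.2)]
  rw [class11 a hdiag hsym, class12 a hdiag hsym, class21 a hdiag hsym,
    class22 a hdiag hsym]
  have h2 : (∑ s ∈ Finset.univ.filter (fun s : Fin n × Fin n => s.1 < s.2),
      a s.1 s.2 ^ 4)
      = ∑ t ∈ Finset.univ.filter (fun t : Fin n × Fin n => t.1 < t.2), P t.1 t.2 ^ 4 := by
    refine Finset.sum_congr rfl ?_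
    intro t ht
    simp only [Finset.mem_filter, Finset.mem_univ, true_and] at ht
    rw [hne _ _ ht.ne]
  have h3 : (∑ t ∈ Finset.univ.filter
        (fun t : Fin n × Fin n × Fin n => t.1 < t.2.1 ∧ t.2.1 < t.2.2),
        (a t.1 t.2.1 ^ 2 * a t.1 t.2.2 ^ 2 + a t.1 t.2.1 ^ 2 * a t.2.1 t.2.2 ^ 2 +
         a t.1 t.2.2 ^ 2 * a t.2.1 t.2.2 ^ 2))
      = ∑ t ∈ Finset.univ.filter
        (fun t : Fin n × Fin n × Fin n => t.1 < t.2.1 ∧ t.2.1 < t.2.2),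
        (P t.1 t.2.1 ^ 2 * P t.1 t.2.2 ^ 2 + P t.1 t.2.1 ^ 2 * P t.2.1 t.2.2 ^ 2 +
         P t.1 t.2.2 ^ 2 * P t.2.1 t.2.2 ^ 2) := by
    refine Finset.sum_congr rfl ?_
    intro t ht
    simp only [Finset.mem_filter, Finset.mem_univ, true_and] at ht
    obtain ⟨l1, l2⟩ := ht
    rw [hne _ _ l1.ne, hne _ _ l2.ne, hne _ _ (l1.trans l2).ne]
  have h4 : (∑ t ∈ Finset.univ.filter
        (fun t : Fin n × Fin n × Fin n × Fin n =>
          t.1 < t.2.1 ∧ t.2.1 < t.2.2.1 ∧ t.2.2.1 < t.2.2.2),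
        (a t.1 t.2.2.1 * a t.1 t.2.2.2 * a t.2.1 t.2.2.1 * a t.2.1 t.2.2.2 +
         a t.1 t.2.1 * a t.1 t.2.2.2 * a t.2.1 t.2.2.1 * a t.2.2.1 t.2.2.2 +
         a t.1 t.2.1 * a t.1 t.2.2.1 * a t.2.1 t.2.2.2 * a t.2.2.1 t.2.2.2))
      = ∑ t ∈ Finset.univ.filter
        (fun t : Fin n × Fin n × Fin n × Fin n =>
          t.1 < t.2.1 ∧ t.2.1 < t.2.2.1 ∧ t.2.2.1 < t.2.2.2),
        (P t.1 t.2.2.1 * P t.1 t.2.2.2 * P t.2.1 t.2.2.1 * P t.2.1 t.2.2.2 +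
         P t.1 t.2.1 * P t.1 t.2.2.2 * P t.2.1 t.2.2.1 * P t.2.2.1 t.2.2.2 +
         P t.1 t.2.1 * P t.1 t.2.2.1 * P t.2.1 t.2.2.2 * P t.2.2.1 t.2.2.2) := by
    refine Finset.sum_congr rfl ?_
    intro t ht
    simp only [Finset.mem_filter, Finset.mem_univ, true_and] at ht
    obtain ⟨l1, l2, l3⟩ := ht
    rw [hne _ _ l1.ne, hne _ _ l2.ne, hne _ _ l3.ne,
      hne _ _ (l1.trans l2).ne, hne _ _ (l2.trans l3).ne,
      hne _ _ ((l1.trans l2).trans l3).ne]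
  rw [h2, h3, h4]
  ring
end
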